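/- arXiv:0805.2403 — 9 statements merged into one kernel-verified Lean document; each statement's English description precedes it below -/
import Mathlib

section
/- Let n be a natural number and let φ be an automorphism of the symmetric group Sym_n (the group of all permutations of an n-element set). Then φ is an inner automorphism if and only if φ maps every transposition of Sym_n to a transposition. -/
/-! Since `φ` is injective, it preserves non-commutation, and two distinct transpositions fail to
commute exactly when they share a point. So the images of the transpositions `(x₀ k)` pairwise
meet. They cannot form a triangle `(a b), (a c), (b c)`: its third side is the conjugate of the
second by the first, which would force `φ (x₀ k) = φ (x₁ x₂)`. Hence all of them move a common
point `a`, and `g k := φ (x₀ k) a` is a permutation with `φ (x y) = (g x  g y)` for all `x, y`.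
Transpositions generate the symmetric group, so `φ` is conjugation by `g`. -/

open Equiv Function

namespace Equiv.Perm

variable {α : Type*}

theorem exists_apply_ne_of_not_commute {σ τ : Perm α} (h : ¬Commute σ τ) :
    ∃ a, σ a ≠ a ∧ τ a ≠ a := by
  contrapose! h
  exact Disjoint.commute fun a => or_iff_not_imp_left.mpr (h a)

variable [DecidableEq α]

theorem IsSwap.eq_swap_apply {σ : Perm α} (hσ : σ.IsSwap) {a : α} (ha : σ a ≠ a) :
    σ = swap a (σ a) := by
  obtain ⟨x, y, -, rfl⟩ := hσ
  obtain ⟨-, rfl | rfl⟩ := swap_apply_ne_self_iff.mp ha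
  · rw [swap_apply_left]
  · rw [swap_apply_right, swap_comm]

theorem not_commute_swap_swap {x j k : α} (hj : j ≠ x) (hk : k ≠ x) (hjk : j ≠ k) :
    ¬Commute (swap x j) (swap x k) := by
  intro h
  have := congrArg (· x) h.eq
  simp only [Perm.mul_apply, swap_apply_left, swap_apply_of_ne_of_ne hk hjk.symm,
    swap_apply_of_ne_of_ne hj hjk] at this
  exact hjk this.symm

/-- The three transpositions form a triangle `(a b₁), (a b₂), (b₁ b₂)`. -/
theorem IsSwap.eq_conj_of_apply_eq {s t u : Perm α} (hs : s.IsSwap) (ht : t.IsSwap)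
    (hu : u.IsSwap) (hst : ¬Commute s t) (hsu : ¬Commute s u) (htu : ¬Commute t u) {a : α}
    (hsa : s a ≠ a) (hta : t a ≠ a) (hua : u a = a) : u = s * t * s⁻¹ := by
  have moves_other {v : Perm α} (hv : v.IsSwap) (hva : v a ≠ a) (hvu : ¬Commute v u) :
      u (v a) ≠ v a := by
    obtain ⟨c, hvc, huc⟩ := exists_apply_ne_of_not_commute hvu
    rw [hv.eq_swap_apply hva] at hvc
    obtain ⟨-, rfl | rfl⟩ := swap_apply_ne_self_iff.mp hvc
    · exact absurd hua huc
    · exact huc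
  have hs' := hs.eq_swap_apply hsa
  have ht' := ht.eq_swap_apply hta
  have hb : s a ≠ t a := fun h => hst (by rw [ht', ← h, ← hs'])
  have hu' := hu.eq_swap_apply (moves_other hs hsa hsu)
  have hst' : s (t a) = t a := by
    rw [hs']
    exact swap_apply_of_ne_of_ne hta hb.symm
  obtain ⟨-, h | h⟩ := swap_apply_ne_self_iff.mp (hu' ▸ moves_other ht hta htu)
  · exact absurd h.symm hb
  · calc u = swap (s a) (s (t a)) := by rw [hu', hst', h]
      _ = s * t * s⁻¹ := by rw [swap_apply_apply, ← ht']

section MapIsSwap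

variable (φ : Perm α ≃* Perm α)

theorem exists_forall_map_swap_apply_ne (hφ : ∀ σ : Perm α, σ.IsSwap → (φ σ).IsSwap) (x₀ : α) :
    ∃ a, ∀ k, k ≠ x₀ → φ (swap x₀ k) a ≠ a := by
  by_cases h : ∃ x₁ x₂, x₁ ≠ x₀ ∧ x₂ ≠ x₀ ∧ x₁ ≠ x₂
  · obtain ⟨x₁, x₂, h₁, h₂, h₁₂⟩ := h
    have hnc {j k : α} (hj : j ≠ x₀) (hk : k ≠ x₀) (hjk : j ≠ k) :
        ¬Commute (φ (swap x₀ j)) (φ (swap x₀ k)) := fun h =>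
      not_commute_swap_swap hj hk hjk (by simpa using h.map φ.symm)
    have hswap {k : α} (hk : k ≠ x₀) : (φ (swap x₀ k)).IsSwap := hφ _ ⟨x₀, k, hk.symm, rfl⟩
    obtain ⟨a, ha₁, ha₂⟩ := exists_apply_ne_of_not_commute (hnc h₁ h₂ h₁₂)
    refine ⟨a, fun k hk hka => ?_⟩
    have hk₁ : x₁ ≠ k := by rintro rfl; exact ha₁ hka
    have hk₂ : x₂ ≠ k := by rintro rfl; exact ha₂ hka
    have htriangle := (hswap h₁).eq_conj_of_apply_eq (hswap h₂) (hswap hk) (hnc h₁ h₂ h₁₂)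
      (hnc h₁ hk hk₁) (hnc h₂ hk hk₂) ha₁ ha₂ hka
    rw [← map_inv, ← map_mul, ← map_mul, ← swap_apply_apply, swap_apply_left,
      swap_apply_of_ne_of_ne h₂ h₁₂.symm] at htriangle
    have := congrArg (· x₀) (φ.injective htriangle)
    simp only [swap_apply_left, swap_apply_of_ne_of_ne h₁.symm h₂.symm] at this
    exact hk this
  · push Not at h
    by_cases h' : ∃ x₁, x₁ ≠ x₀
    · obtain ⟨x₁, h₁⟩ := h'
      obtain ⟨a, b, hab, hφ₁⟩ := hφ _ ⟨x₀, x₁, h₁.symm, rfl⟩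
      refine ⟨a, fun k hk => ?_⟩
      rw [h k x₁ hk h₁, hφ₁, swap_apply_left]
      exact hab.symm
    · push Not at h'
      exact ⟨x₀, fun k hk => absurd (h' k) hk⟩

theorem exists_injective_map_swap_eq_swap (hφ : ∀ σ : Perm α, σ.IsSwap → (φ σ).IsSwap) :
    ∃ f : α → α, Injective f ∧ ∀ x y, φ (swap x y) = swap (f x) (f y) := by
  cases isEmpty_or_nonempty α
  · exact ⟨id, injective_id, fun x => isEmptyElim x⟩
  obtain ⟨x₀⟩ := ‹Nonempty α›
  obtain ⟨a, ha⟩ := exists_forall_map_swap_apply_ne φ hφ x₀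
  set f : α → α := fun k => φ (swap x₀ k) a
  have map_swap_self (x : α) : φ (swap x x) = 1 := by rw [swap_self, ← one_def, map_one]
  have hf₀ : f x₀ = a := by simp only [f, map_swap_self, one_apply]
  have hstar (k : α) : φ (swap x₀ k) = swap (f x₀) (f k) := by
    rcases eq_or_ne k x₀ with rfl | hk
    · rw [map_swap_self, swap_self, one_def]
    · rw [hf₀]
      exact (hφ _ ⟨x₀, k, hk.symm, rfl⟩).eq_swap_apply (ha k hk)
  have hf : Injective f := by
    intro j k hjk
    have := congrArg (· x₀) (φ.injective ((hstar j).trans (hjk ▸ (hstar k).symm)))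
    simpa using this
  refine ⟨f, hf, fun x y => ?_⟩
  rcases eq_or_ne x x₀ with rfl | hx
  · exact hstar y
  rcases eq_or_ne y x₀ with rfl | hy
  · rw [swap_comm, hstar, swap_comm]
  rcases eq_or_ne x y with rfl | hxy
  · rw [map_swap_self, swap_self, one_def]
  have hconj : swap x y = swap x₀ x * swap x₀ y * (swap x₀ x)⁻¹ := by
    rw [← swap_apply_apply, swap_apply_left, swap_apply_of_ne_of_ne hy hxy.symm]
  rw [hconj, map_mul, map_mul, map_inv, hstar, hstar, ← swap_apply_apply, swap_apply_left,
    swap_apply_of_ne_of_ne (hf.ne hy) (hf.ne hxy.symm)]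

theorem exists_conj_eq_of_map_isSwap [Finite α] (hφ : ∀ σ : Perm α, σ.IsSwap → (φ σ).IsSwap) :
    ∃ g : Perm α, MulAut.conj g = φ := by
  obtain ⟨f, hf, hφf⟩ := exists_injective_map_swap_eq_swap φ hφ
  refine ⟨ofBijective f (Finite.injective_iff_bijective.mp hf),
    MulEquiv.toMonoidHom_injective (MonoidHom.eq_of_eqOn_dense closure_isSwap ?_)⟩
  rintro _ ⟨x, y, -, rfl⟩
  simp [hφf, ← swap_apply_apply]

end MapIsSwap

end Equiv.Perm

/-- An automorphism of the symmetric group `Sym_n` is inner if and only if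
it maps every transposition to a transposition. -/
theorem stmt_0 (n : ℕ) (φ : Equiv.Perm (Fin n) ≃* Equiv.Perm (Fin n)) :
    (∃ g : Equiv.Perm (Fin n), ∀ h : Equiv.Perm (Fin n), φ h = g⁻¹ * h * g) ↔
      (∀ σ : Equiv.Perm (Fin n), σ.IsSwap → (φ σ).IsSwap) := by
  constructor
  · rintro ⟨g, hg⟩ σ ⟨x, y, hxy, rfl⟩
    refine ⟨g⁻¹ x, g⁻¹ y, g⁻¹.injective.ne hxy, ?_⟩
    rw [hg, swap_apply_apply, inv_inv]
  · intro hφ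
    obtain ⟨g, rfl⟩ := Perm.exists_conj_eq_of_map_isSwap φ hφ
    exact ⟨g⁻¹, fun h => by simp⟩
end

section
/- Let k ≥ 1 and n ≥ 2k, and let 𝒜 be a family of k-element subsets of {1,…,n} such that any two members of 𝒜 have nonempty intersection (equivalently, 𝒜 is an independent set of the Kneser graph K(n,k)). Then |𝒜| ≤ C(n−1, k−1). Moreover, if n > 2k and |𝒜| = C(n−1, k−1), then there exists an element x ∈ {1,…,n} such that 𝒜 consists exactly of all k-element subsets of {1,…,n} containing x. -/
/-!
The bound is `Finset.erdos_ko_rado`; uniqueness comes from Katona's cycle method.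
Arrange the ground set around a cycle of length `n`. Of the `n` arcs of length `k`, at most `k`
pairwise intersect when `n ≥ 2k`. Every `k`-set is an arc of equally many arrangements, so the
number of arcs lying in `𝒜`, summed over all arrangements, is proportional to `#𝒜`; a star has
exactly `k` such arcs in every arrangement, hence so does a largest intersecting family.
For `n > 2k`, `k` intersecting arcs including arc `q` but not arc `q + 1` are exactly the arcs
through position `q`. This yields `a ∈ A ∈ 𝒜` and `b ∉ A` with `A - a + b ∉ 𝒜`, and then, by
placing `A` and any `k`-set `C` with `a ∈ C`, `b ∉ C` as arcs of one arrangement, `C ∈ 𝒜`.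
A member of `𝒜` missing `a` would be disjoint from one of these `C`.
-/

open Finset

namespace Katona

lemma exists_equiv_comp_eq {α β ι : Type*} [Fintype α] [Fintype β] [DecidableEq ι]
    {f : α → ι} {g : β → ι} (h : ∀ i, #{x | f x = i} = #{y | g y = i}) :
    ∃ e : α ≃ β, ∀ x, g (e x) = f x :=
  ⟨Equiv.ofFiberEquiv fun i => Fintype.equivOfCardEq (by simp only [Fintype.card_subtype, h]),
    Equiv.ofFiberEquiv_map _⟩

section Venn

variable {α : Type*} [Fintype α] [DecidableEq α]

def vennLabel (u v : α) (X Y : Finset α) (x : α) : ℕ :=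
  if x = u then 0 else if x = v then 1 else if x ∈ X then (if x ∈ Y then 2 else 3)
  else if x ∈ Y then 4 else 5

def vennCount (N x y z : ℕ) : ℕ → ℕ
  | 0 => 1
  | 1 => 1
  | 2 => z - 1
  | 3 => x - z
  | 4 => y - z
  | 5 => N - (x + y - z) - 1
  | _ => 0

lemma card_filter_vennLabel {u v : α} {X Y : Finset α} (hu : u ∈ X ∩ Y) (hv : v ∉ X ∪ Y)
    (i : ℕ) : #{x | vennLabel u v X Y x = i} = vennCount (Fintype.card α) #X #Y #(X ∩ Y) i := by
  match i with
  | 0 =>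
    rw [show ({x | vennLabel u v X Y x = 0} : Finset α) = {u} by ext; grind [vennLabel]]
    rfl
  | 1 =>
    rw [show ({x | vennLabel u v X Y x = 1} : Finset α) = {v} by ext; grind [vennLabel]]
    rfl
  | 2 =>
    rw [show ({x | vennLabel u v X Y x = 2} : Finset α) = (X ∩ Y).erase u by ext; grind [vennLabel],
      card_erase_of_mem hu]
    rfl
  | 3 =>
    rw [show ({x | vennLabel u v X Y x = 3} : Finset α) = X \ Y by ext; grind [vennLabel],
      card_sdiff, inter_comm]
    rfl
  | 4 =>
    rw [show ({x | vennLabel u v X Y x = 4} : Finset α) = Y \ X by ext; grind [vennLabel],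
      card_sdiff]
    rfl
  | 5 =>
    rw [show ({x | vennLabel u v X Y x = 5} : Finset α) = (X ∪ Y)ᶜ.erase v by
      ext; grind [vennLabel, mem_compl], card_erase_of_mem (mem_compl.2 hv), card_compl]
    have := card_union_add_card_inter X Y
    simp only [vennCount]
    omega
  | i + 6 =>
    rw [show ({x | vennLabel u v X Y x = i + 6} : Finset α) = ∅ by ext; grind [vennLabel]]
    rfl

lemma exists_equiv_venn {β : Type*} [Fintype β] [DecidableEq β]
    (hcard : Fintype.card α = Fintype.card β) {X Y : Finset α} {X' Y' : Finset β} {u v : α}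
    {u' v' : β} (hu : u ∈ X ∩ Y) (hv : v ∉ X ∪ Y) (hu' : u' ∈ X' ∩ Y') (hv' : v' ∉ X' ∪ Y')
    (hX : #X = #X') (hY : #Y = #Y') (hXY : #(X ∩ Y) = #(X' ∩ Y')) :
    ∃ e : α ≃ β, e u = u' ∧ e v = v' ∧ X.map e.toEmbedding = X' ∧ Y.map e.toEmbedding = Y' := by
  obtain ⟨e, he⟩ := exists_equiv_comp_eq (f := vennLabel u v X Y) (g := vennLabel u' v' X' Y')
    fun i => by rw [card_filter_vennLabel hu hv, card_filter_vennLabel hu' hv', hcard, hX, hY, hXY]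
  refine ⟨e, ?_, ?_, ?_, ?_⟩
  · have := he u; grind [vennLabel]
  · have := he v; grind [vennLabel]
  · ext y; have := he (e.symm y); rw [mem_map_equiv]; grind [vennLabel]
  · ext y; have := he (e.symm y); rw [mem_map_equiv]; grind [vennLabel]

end Venn

section Arc

lemma natCast_inj_of_lt {n a b : ℕ} (ha : a < n) (hb : b < n) : (a : ZMod n) = b ↔ a = b := by
  rw [ZMod.natCast_eq_natCast_iff', Nat.mod_eq_of_lt ha, Nat.mod_eq_of_lt hb]

variable {n k : ℕ}

def arc (k : ℕ) (s : ZMod n) : Finset (ZMod n) := (range k).image fun i : ℕ => s + i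

lemma mem_arc_iff_exists {s x : ZMod n} : x ∈ arc k s ↔ ∃ i < k, s + i = x := by
  simp [arc]

lemma mem_arc [NeZero n] (hk : k ≤ n) {s x : ZMod n} : x ∈ arc k s ↔ (x - s).val < k := by
  rw [mem_arc_iff_exists]
  constructor
  · rintro ⟨i, hi, rfl⟩
    rwa [add_sub_cancel_left, ZMod.val_cast_of_lt (hi.trans_le hk)]
  · exact fun h => ⟨_, h, by rw [ZMod.natCast_zmod_val, add_sub_cancel]⟩

lemma card_arc (hk : k ≤ n) (s : ZMod n) : #(arc k s) = k := by
  rw [arc, card_image_of_injOn, card_range]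
  intro i hi j hj hij
  simp only [coe_range, Set.mem_Iio] at hi hj
  exact (natCast_inj_of_lt (hi.trans_le hk) (hj.trans_le hk)).1 (add_left_cancel hij)

lemma mem_arc_or_mem_arc_of_not_disjoint {a b : ZMod n} (h : ¬Disjoint (arc k a) (arc k b)) :
    b ∈ arc k a ∨ a ∈ arc k b := by
  obtain ⟨x, hxa, hxb⟩ := not_disjoint_iff.1 h
  obtain ⟨i, hi, rfl⟩ := mem_arc_iff_exists.1 hxa
  obtain ⟨j, hj, hx⟩ := mem_arc_iff_exists.1 hxb
  rcases le_total j i with hji | hij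
  · exact .inl (mem_arc_iff_exists.2 ⟨i - j, by omega, by push_cast [hji]; linear_combination -hx⟩)
  · exact .inr (mem_arc_iff_exists.2 ⟨j - i, by omega, by push_cast [hij]; linear_combination hx⟩)

lemma disjoint_arc_add {d : ℕ} (hkd : k ≤ d) (hdn : d + k ≤ n) (s : ZMod n) :
    Disjoint (arc k s) (arc k (s + d)) := by
  refine disjoint_left.2 fun x hx hx' => ?_
  obtain ⟨i, hi, rfl⟩ := mem_arc_iff_exists.1 hx
  obtain ⟨j, hj, hx⟩ := mem_arc_iff_exists.1 hx'
  have : ((d + j : ℕ) : ZMod n) = i := by push_cast; linear_combination hx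
  have := (natCast_inj_of_lt (by omega) (by omega)).1 this
  omega

lemma arc_add_one (hk : 0 < k) (hkn : k < n) (s : ZMod n) :
    arc k (s + 1) = insert (s + k) ((arc k s).erase s) := by
  ext x
  simp only [mem_insert, mem_erase, mem_arc_iff_exists]
  constructor
  · rintro ⟨i, hi, rfl⟩
    rcases eq_or_lt_of_le (Nat.succ_le_of_lt hi) with h | h
    · left; rw [← h]; push_cast; ring
    · refine .inr ⟨fun h' => ?_, i + 1, h, by push_cast; ring⟩
      have : ((i + 1 : ℕ) : ZMod n) = (0 : ℕ) := by push_cast; linear_combination h'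
      have := (natCast_inj_of_lt (by omega) (by omega)).1 this
      omega
  · rintro (rfl | ⟨hxs, i, hi, rfl⟩)
    · exact ⟨k - 1, by omega, by push_cast [Nat.one_le_iff_ne_zero.2 hk.ne']; ring⟩
    · obtain ⟨i, rfl⟩ : ∃ i', i = i' + 1 := Nat.exists_eq_add_one.2 (by
        by_contra h0; simp_all)
      exact ⟨i, by omega, by push_cast; ring⟩

lemma self_mem_arc (hk : 0 < k) (s : ZMod n) : s ∈ arc k s :=
  mem_arc_iff_exists.2 ⟨0, hk, by simp⟩

lemma add_notMem_arc [NeZero n] (hkn : k < n) (s : ZMod n) : s + k ∉ arc k s := by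
  rw [mem_arc hkn.le, add_sub_cancel_left, ZMod.val_cast_of_lt hkn]
  exact lt_irrefl k

lemma card_arc_inter_arc_add {d : ℕ} (hdk : d ≤ k) (hkn : k + d ≤ n) (s : ZMod n) :
    #(arc k s ∩ arc k (s + (d : ZMod n))) = k - d := by
  have : arc k s ∩ arc k (s + (d : ZMod n)) = arc (k - d) (s + (d : ZMod n)) := by
    ext x
    simp only [mem_inter, mem_arc_iff_exists]
    constructor
    · rintro ⟨⟨i, hi, rfl⟩, j, hj, hx⟩
      have : ((d + j : ℕ) : ZMod n) = i := by push_cast; linear_combination hx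
      have := (natCast_inj_of_lt (by omega) (by omega)).1 this
      exact ⟨j, by omega, hx⟩
    · rintro ⟨j, hj, rfl⟩
      exact ⟨⟨d + j, by omega, by push_cast; ring⟩, j, by omega, rfl⟩
  rw [this, card_arc (by omega)]

lemma card_filter_mem_arc [NeZero n] (hk : k ≤ n) (p : ZMod n) : #{s | p ∈ arc k s} = k := by
  refine (card_equiv (Equiv.subLeft p) fun s => ?_).trans (card_arc hk 0)
  simp [mem_arc hk]

lemma exists_mem_add_one_notMem [NeZero n] {S : Finset (ZMod n)} (hne : S.Nonempty)
    (hS : S ≠ univ) : ∃ q ∈ S, q + 1 ∉ S := by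
  by_contra! h
  obtain ⟨q, hq⟩ := hne
  have hadd : ∀ m : ℕ, q + m ∈ S := by
    intro m
    induction m with
    | zero => simpa using hq
    | succ m ih => simpa [add_assoc] using h _ ih
  exact hS (eq_univ_of_forall fun x => by simpa using hadd (x - q).val)

end Arc

section IntersectingArcs

variable {n k : ℕ} {S : Finset (ZMod n)}

-- Katona's pairing: an arc meeting `arc k q` but not starting in it starts at `q + i - k` with
-- `0 < i < k`; shifting by `k` matches it with the start `q + i`, and arcs `k` apart are disjoint.
def foldInto (k : ℕ) (q a : ZMod n) : ZMod n := if a ∈ arc k q then a else a + k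

lemma foldInto_mem_arc (hS : ∀ a ∈ S, ∀ b ∈ S, ¬Disjoint (arc k a) (arc k b)) {q a : ZMod n}
    (hq : q ∈ S) (ha : a ∈ S) : foldInto k q a ∈ arc k q := by
  unfold foldInto
  split_ifs with haq
  · exact haq
  obtain ⟨i, hi, rfl⟩ :=
    mem_arc_iff_exists.1 ((mem_arc_or_mem_arc_of_not_disjoint (hS q hq a ha)).resolve_left haq)
  have hi0 : i ≠ 0 := by
    rintro rfl
    exact haq (mem_arc_iff_exists.2 ⟨0, hi, by simp⟩)
  exact mem_arc_iff_exists.2 ⟨k - i, by omega, by push_cast [hi.le]; ring⟩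

lemma foldInto_injOn (hn : 2 * k ≤ n) (hS : ∀ a ∈ S, ∀ b ∈ S, ¬Disjoint (arc k a) (arc k b))
    (q : ZMod n) : Set.InjOn (foldInto k q) S := by
  have hsep : ∀ a ∈ S, ∀ b ∈ S, a ≠ b + k := fun a ha b hb hab =>
    hS b hb a ha (hab ▸ disjoint_arc_add le_rfl (by omega) b)
  intro a ha b hb hab
  unfold foldInto at hab
  split_ifs at hab
  · exact hab
  · exact absurd hab (hsep a ha b hb)
  · exact absurd hab.symm (hsep b hb a ha)
  · exact add_right_cancel hab

theorem card_le_of_forall_not_disjoint (hn : 2 * k ≤ n)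
    (hS : ∀ a ∈ S, ∀ b ∈ S, ¬Disjoint (arc k a) (arc k b)) : #S ≤ k := by
  obtain rfl | ⟨q, hq⟩ := S.eq_empty_or_nonempty
  · simp
  calc #S ≤ #(arc k q) :=
        card_le_card_of_injOn _ (fun a ha => foldInto_mem_arc hS hq ha) (foldInto_injOn hn hS q)
    _ = k := card_arc (by omega) q

lemma add_mem_or_sub_mem (hn : 2 * k ≤ n)
    (hS : ∀ a ∈ S, ∀ b ∈ S, ¬Disjoint (arc k a) (arc k b)) (hcard : #S = k) {q : ZMod n}
    (hq : q ∈ S) {m : ℕ} (hm : m < k) : q + m ∈ S ∨ q + m - k ∈ S := by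
  have himage : S.image (foldInto k q) = arc k q := by
    refine eq_of_subset_of_card_le (image_subset_iff.2 fun a ha => foldInto_mem_arc hS hq ha) ?_
    rw [card_image_of_injOn (foldInto_injOn hn hS q), card_arc (by omega), hcard]
  obtain ⟨a, ha, hfold⟩ := mem_image.1 (himage ▸ mem_arc_iff_exists.2 ⟨m, hm, rfl⟩)
  unfold foldInto at hfold
  split_ifs at hfold
  · exact .inl (hfold ▸ ha)
  · exact .inr (by rw [← hfold, add_sub_cancel_right]; exact ha)

theorem sub_mem_of_add_one_notMem (hn : 2 * k < n)
    (hS : ∀ a ∈ S, ∀ b ∈ S, ¬Disjoint (arc k a) (arc k b)) (hcard : #S = k) {q : ZMod n}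
    (hq : q ∈ S) (hq1 : q + 1 ∉ S) {i : ℕ} (hi : i < k) : q - i ∈ S := by
  have hout : ∀ m, 0 < m → m < k → q + m ∉ S := by
    intro m
    induction m with
    | zero => omega
    | succ m ih =>
      intro _ hm hmem
      obtain rfl | hm0 := m.eq_zero_or_pos
      · exact hq1 (by simpa using hmem)
      have hleft := (add_mem_or_sub_mem hn.le hS hcard hq (m := m) (by omega)).resolve_left
        (ih hm0 (by omega))
      -- arcs `k + 1` apart are disjoint, so `q + m - k ∈ S` pushes `q + (m + 1)` out of `S`
      have hdisj :=
        disjoint_arc_add (n := n) (k := k) (d := k + 1) (by omega) (by omega) (q + m - k)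
      rw [show q + m - k + ((k + 1 : ℕ) : ZMod n) = q + (m + 1 : ℕ) by push_cast; ring] at hdisj
      exact hS _ hleft _ hmem hdisj
  obtain rfl | hi0 := i.eq_zero_or_pos
  · simpa using hq
  convert (add_mem_or_sub_mem hn.le hS hcard hq (m := k - i) (by omega)).resolve_left
    (hout _ (by omega) (by omega)) using 1
  push_cast [hi.le]; ring

end IntersectingArcs

section Arrangement

variable {α : Type*} [DecidableEq α] {n k : ℕ}

lemma map_arc_add_one (hk : 0 < k) (hkn : k < n) (σ : ZMod n ≃ α) (s : ZMod n) :
    (arc k (s + 1)).map σ.toEmbedding =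
      insert (σ (s + k)) (((arc k s).map σ.toEmbedding).erase (σ s)) := by
  rw [arc_add_one hk hkn, map_insert, map_erase]
  rfl

variable [NeZero n]

-- A cyclic arrangement of `α` is an equivalence `ZMod n ≃ α`.
def goodStarts (k : ℕ) (𝒜 : Finset (Finset α)) (σ : ZMod n ≃ α) : Finset (ZMod n) :=
  {s | (arc k s).map σ.toEmbedding ∈ 𝒜}

lemma not_disjoint_of_mem_goodStarts {𝒜 : Finset (Finset α)}
    (h𝒜 : (𝒜 : Set (Finset α)).Intersecting) {σ : ZMod n ≃ α} :
    ∀ a ∈ goodStarts k 𝒜 σ, ∀ b ∈ goodStarts k 𝒜 σ, ¬Disjoint (arc k a) (arc k b) := by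
  intro a ha b hb hab
  simp only [goodStarts, mem_filter_univ] at ha hb
  exact h𝒜 ha hb (disjoint_map _ |>.2 hab)

variable [Fintype α]

def arcPlacements (n k : ℕ) [NeZero n] (A : Finset α) : Finset ((ZMod n ≃ α) × ZMod n) :=
  {p | (arc k p.2).map p.1.toEmbedding = A}

lemma card_goodStarts_star (hk : k ≤ n) (x : α) (σ : ZMod n ≃ α) :
    #(goodStarts k ((univ.powersetCard k).filter (x ∈ ·)) σ) = k := by
  refine Eq.trans ?_ (card_filter_mem_arc hk (σ.symm x))
  congr 1
  ext s
  simp [goodStarts, mem_map_equiv, card_arc hk]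

lemma sum_card_goodStarts (𝒜 : Finset (Finset α)) :
    ∑ σ : ZMod n ≃ α, #(goodStarts k 𝒜 σ) = ∑ A ∈ 𝒜, #(arcPlacements n k A) := by
  simp only [arcPlacements, goodStarts]
  rw [sum_card_fiberwise_eq_card_filter, card_filter, Fintype.sum_prod_type]
  simp only [card_filter]

lemma card_arcPlacements_congr {A B : Finset α} (h : #A = #B) :
    #(arcPlacements n k A) = #(arcPlacements n k B) := by
  obtain ⟨π, hπ⟩ := (Set.powersetCard.isPretransitive (α := α) (n := #A)).exists_smul_eq
    ⟨A, rfl⟩ ⟨B, h.symm⟩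
  replace hπ : A.map π.toEmbedding = B := by
    simpa [map_eq_image, smul_finset_def] using congrArg Subtype.val hπ
  refine card_equiv ((Equiv.refl _).equivCongr π |>.prodCongr (Equiv.refl _)) fun p => ?_
  simp only [arcPlacements, mem_filter_univ]
  change _ ↔ (arc k p.2).map (p.1.trans π).toEmbedding = B
  rw [Equiv.trans_toEmbedding, ← map_map, ← hπ, map_inj]

lemma card_goodStarts_eq_of_card_star_le (hn : 2 * k ≤ n) {𝒜 : Finset (Finset α)}
    (h𝒜 : (𝒜 : Set (Finset α)).Intersecting) (hs : (𝒜 : Set (Finset α)).Sized k) {x : α}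
    (hx : #((univ.powersetCard k).filter (x ∈ ·)) ≤ #𝒜) (σ : ZMod n ≃ α) :
    #(goodStarts k 𝒜 σ) = k := by
  set 𝒮 := (univ.powersetCard k).filter (x ∈ ·)
  have hcount : ∀ ℬ : Finset (Finset α), (ℬ : Set (Finset α)).Sized k →
      ∑ τ : ZMod n ≃ α, #(goodStarts k ℬ τ) =
        #ℬ * #(arcPlacements n k ((arc k 0).map σ.toEmbedding)) := fun ℬ hℬ => by
    rw [sum_card_goodStarts]
    exact sum_const_nat fun A hA =>
      card_arcPlacements_congr (by rw [hℬ hA, card_map, card_arc (by omega)])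
  have hle : ∀ τ, #(goodStarts k 𝒜 τ) ≤ k := fun τ =>
    card_le_of_forall_not_disjoint hn (not_disjoint_of_mem_goodStarts h𝒜)
  have hsum : ∑ τ : ZMod n ≃ α, #(goodStarts k 𝒜 τ) = ∑ τ : ZMod n ≃ α, k := by
    refine le_antisymm (sum_le_sum fun τ _ => hle τ) ?_
    calc ∑ τ : ZMod n ≃ α, k = ∑ τ, #(goodStarts k 𝒮 τ) := by
          simp only [𝒮, card_goodStarts_star (by omega : k ≤ n)]
      _ = #𝒮 * _ := hcount 𝒮 fun A hA => mem_powersetCard_univ.1 (mem_filter.1 hA).1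
      _ ≤ #𝒜 * _ := by gcongr
      _ = _ := (hcount 𝒜 hs).symm
  exact (sum_eq_sum_iff_of_le fun τ _ => hle τ).1 hsum σ (mem_univ σ)

lemma mem_of_exchange (hn : 2 * k < n) (hα : Fintype.card α = n) {𝒜 : Finset (Finset α)}
    (h𝒜 : (𝒜 : Set (Finset α)).Intersecting) (hgood : ∀ σ : ZMod n ≃ α, #(goodStarts k 𝒜 σ) = k)
    {A C : Finset α} {a b : α} (hA : A ∈ 𝒜) (hAk : #A = k) (haA : a ∈ A) (hbA : b ∉ A)
    (hA' : insert b (A.erase a) ∉ 𝒜) (hCk : #C = k) (haC : a ∈ C) (hbC : b ∉ C) : C ∈ 𝒜 := by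
  set j := #(C \ A)
  have hAC : #(A ∩ C) = k - j := by
    have := card_sdiff (s := A) (t := C)
    have := card_le_card (inter_subset_right : A ∩ C ⊆ C)
    omega
  have hj : j < k := by
    have := card_pos.2 ⟨a, mem_inter.2 ⟨haA, haC⟩⟩
    have := card_sdiff (s := A) (t := C)
    omega
  have hk : 0 < k := by omega
  -- `A` and `C` become the arcs at `j` and `0` of `τ`, with `a` at `j` and `b` at `j + k`, so that
  -- the arc at `j + 1` is `A - a + b`.
  obtain ⟨τ, hτa, hτb, hτA, hτC⟩ := exists_equiv_venn (X := arc k (j : ZMod n)) (Y := arc k 0)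
    (u := (j : ZMod n)) (v := (j : ZMod n) + k) (X' := A) (Y' := C) (u' := a) (v' := b)
    (by simp [hα]) (mem_inter.2 ⟨self_mem_arc hk _, mem_arc_iff_exists.2 ⟨j, hj, zero_add _⟩⟩)
    (by
      rw [mem_union, not_or]
      refine ⟨add_notMem_arc (n := n) (k := k) (by omega) _, ?_⟩
      rw [mem_arc (by omega), sub_zero, ← Nat.cast_add, ZMod.val_cast_of_lt (by omega)]
      omega)
    (mem_inter.2 ⟨haA, haC⟩) (by simp [hbA, hbC]) (by rw [card_arc (by omega), hAk])
    (by rw [card_arc (by omega), hCk])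
    (by
      rw [inter_comm, ← zero_add (j : ZMod n),
        card_arc_inter_arc_add (n := n) (k := k) hj.le (by omega), hAC])
  have hS := not_disjoint_of_mem_goodStarts (k := k) h𝒜 (σ := τ)
  have hjS : (j : ZMod n) ∈ goodStarts k 𝒜 τ := by simpa [goodStarts, hτA]
  have hj1S : (j : ZMod n) + 1 ∉ goodStarts k 𝒜 τ := by
    simp only [goodStarts, mem_filter_univ]
    rwa [map_arc_add_one (n := n) hk (by omega), hτA, hτa, hτb]
  simpa [goodStarts, hτC] using sub_mem_of_add_one_notMem hn hS (hgood τ) hjS hj1S hj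

end Arrangement

section Uniqueness

variable {α : Type*} [Fintype α] [DecidableEq α] {k : ℕ}

lemma mem_of_intersecting_of_forall_mem (hn : 2 * k < Fintype.card α)
    {𝒜 : Finset (Finset α)} (h𝒜 : (𝒜 : Set (Finset α)).Intersecting) {a b : α} (hab : a ≠ b)
    (hkey : ∀ C : Finset α, #C = k → a ∈ C → b ∉ C → C ∈ 𝒜) {D : Finset α} (hD : D ∈ 𝒜)
    (hDk : #D = k) : a ∈ D := by
  by_contra haD
  obtain ⟨C, hCsub, hCk⟩ := exists_subset_card_eq (s := (insert a (insert b D))ᶜ) (n := k - 1) (by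
    have := card_insert_le a (insert b D)
    have := card_insert_le b D
    rw [card_compl]
    omega)
  have hC : ∀ x ∈ C, x ≠ a ∧ x ≠ b ∧ x ∉ D := fun x hx => by simpa using hCsub hx
  have hk : 0 < k := hDk ▸ card_pos.2 (nonempty_iff_ne_empty.2 (h𝒜.ne_bot hD))
  refine h𝒜 (hkey (insert a C) ?_ (mem_insert_self a C) ?_) hD ?_
  · rw [card_insert_of_notMem fun h => (hC a h).1 rfl, hCk]
    omega
  · simpa [Ne.symm hab] using fun h => (hC b h).2.1 rfl
  · simpa [disjoint_left, haD] using fun x hx => (hC x hx).2.2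

theorem exists_eq_star_of_forall_card_le (hk : 0 < k) (hn : 2 * k < Fintype.card α)
    {𝒜 : Finset (Finset α)} (h𝒜 : (𝒜 : Set (Finset α)).Intersecting)
    (hs : (𝒜 : Set (Finset α)).Sized k)
    (hmax : ∀ ℬ : Finset (Finset α), (ℬ : Set (Finset α)).Intersecting →
      (ℬ : Set (Finset α)).Sized k → #ℬ ≤ #𝒜) :
    ∃ x, 𝒜 = (univ.powersetCard k).filter (x ∈ ·) := by
  obtain ⟨n, hα⟩ : ∃ n, Fintype.card α = n := ⟨_, rfl⟩
  rw [hα] at hn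
  have : NeZero n := ⟨by omega⟩
  have hstar : ∀ x : α, #((univ.powersetCard k).filter (x ∈ ·)) ≤ #𝒜 := fun x =>
    hmax _ (fun A hA B hB hAB => disjoint_left.1 hAB (mem_filter.1 hA).2 (mem_filter.1 hB).2)
      fun A hA => mem_powersetCard_univ.1 (mem_filter.1 hA).1
  obtain ⟨σ⟩ : Nonempty (ZMod n ≃ α) := ⟨Fintype.equivOfCardEq (by simp [hα])⟩
  have hgood := card_goodStarts_eq_of_card_star_le hn.le h𝒜 hs (hstar (σ 0))
  obtain ⟨q, hq, hq1⟩ := exists_mem_add_one_notMem (S := goodStarts k 𝒜 σ)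
    (card_pos.1 (by rw [hgood σ]; exact hk)) fun h => by
      have := congrArg card h
      rw [hgood σ, card_univ, ZMod.card] at this
      omega
  simp only [goodStarts, mem_filter_univ] at hq hq1
  rw [map_arc_add_one hk (by omega)] at hq1
  have hab : σ q ≠ σ (q + k) := fun h => add_notMem_arc (n := n) (k := k) (by omega) q
    (by rw [← σ.injective h]; exact self_mem_arc hk q)
  refine ⟨σ q, eq_of_subset_of_card_le (fun D hD => ?_) (hstar (σ q))⟩
  refine mem_filter.2 ⟨mem_powersetCard_univ.2 (hs hD),
    mem_of_intersecting_of_forall_mem (hα ▸ hn) h𝒜 hab (fun C hC haC hbC => ?_) hD (hs hD)⟩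
  exact mem_of_exchange hn hα h𝒜 hgood hq (by rw [card_map, card_arc (by omega)])
    (mem_map_of_mem _ (self_mem_arc hk q))
    (by simpa using add_notMem_arc (n := n) (k := k) (by omega) q) hq1 hC haC hbC

end Uniqueness

end Katona

open Katona

/-- Erdős–Ko–Rado. If `k ≥ 1`, `n ≥ 2k` and `𝒜` is a family of `k`-element
subsets of `{1,…,n}` any two of which intersect (an independent set of the Kneser graph
`K(n,k)`), then `|𝒜| ≤ C(n-1, k-1)`; moreover if `n > 2k` and equality holds then `𝒜` is the
family of all `k`-subsets containing some fixed element `x`. -/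
theorem stmt_2 (n k : ℕ) (hk : 1 ≤ k) (hn : 2 * k ≤ n)
    (𝒜 : Finset (Finset (Fin n)))
    (hcard : ∀ A ∈ 𝒜, A.card = k)
    (hint : ∀ A ∈ 𝒜, ∀ B ∈ 𝒜, (A ∩ B).Nonempty) :
    𝒜.card ≤ (n - 1).choose (k - 1) ∧
      (2 * k < n → 𝒜.card = (n - 1).choose (k - 1) →
        ∃ x : Fin n,
          𝒜 = (Finset.univ.powersetCard k).filter (fun A : Finset (Fin n) => x ∈ A)) := by
  have h𝒜 : (𝒜 : Set (Finset (Fin n))).Intersecting := fun A hA B hB =>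
    not_disjoint_iff_nonempty_inter.2 (hint A hA B hB)
  have hbound : ∀ ℬ : Finset (Finset (Fin n)), (ℬ : Set (Finset (Fin n))).Intersecting →
      (ℬ : Set (Finset (Fin n))).Sized k → #ℬ ≤ (n - 1).choose (k - 1) := fun ℬ hℬ hs =>
    erdos_ko_rado hℬ hs (by omega)
  refine ⟨hbound 𝒜 h𝒜 hcard, fun hlt heq => ?_⟩
  exact exists_eq_star_of_forall_card_le hk (by simpa using hlt) h𝒜 hcard
    fun ℬ hℬ hs => heq ▸ hbound ℬ hℬ hs
end

section
/- Let k ≥ 1 and n > 2k. Then the automorphism group of the Kneser graph K(n,k) is isomorphic to the symmetric group Sym_n, the isomorphism being induced by the action of permutations of {1,…,n} on k-element subsets. -/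
/-- The Kneser graph `K(n,k)`: vertices are the `k`-element subsets of `{1,…,n}`,
two subsets being adjacent iff they are disjoint. -/
def kneserGraph (n k : ℕ) : SimpleGraph {A : Finset (Fin n) // A.card = k} :=
  SimpleGraph.fromRel fun A B => Disjoint A.1 B.1

/-- The automorphisms of a simple graph form a group under composition. -/
instance graphAutGroup {V : Type*} (G : SimpleGraph V) : Group (G ≃g G) where
  mul f g := g.trans f
  one := SimpleGraph.Iso.refl
  inv f := f.symm
  mul_assoc _ _ _ := rfl
  one_mul _ := rfl
  mul_one _ := rfl
  inv_mul_cancel f := RelIso.ext fun x => f.symm_apply_apply x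

open Finset

namespace KneserAut

variable {n k : ℕ}

abbrev KV (n k : ℕ) := {A : Finset (Fin n) // A.card = k}

lemma kneser_adj (hk : 1 ≤ k) (A B : KV n k) :
    (kneserGraph n k).Adj A B ↔ Disjoint A.1 B.1 := by
  rw [kneserGraph, SimpleGraph.fromRel_adj]
  constructor
  · rintro ⟨hne, h | h⟩
    · exact h
    · exact h.symm
  · intro h
    refine ⟨?_, Or.inl h⟩
    rintro rfl
    have h0 : A.1 = ∅ := disjoint_self.mp h
    have := A.2
    rw [h0] at this
    simp at this
    omega

/-- number of common neighbours -/
noncomputable def N (A B : KV n k) : ℕ :=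
  Nat.card {C : KV n k // (kneserGraph n k).Adj A C ∧ (kneserGraph n k).Adj B C}

lemma N_eq (hk : 1 ≤ k) (A B : KV n k) :
    N A B = (n - (A.1 ∪ B.1).card).choose k := by
  have hcompl : ((A.1 ∪ B.1)ᶜ).card = n - (A.1 ∪ B.1).card := by
    rw [Finset.card_compl]; simp
  rw [← hcompl, ← Finset.card_powersetCard, ← Nat.card_eq_finsetCard]
  apply Nat.card_congr
  refine ⟨fun C => ⟨C.1.1, ?_⟩, fun D => ⟨⟨D.1, (Finset.mem_powersetCard.mp D.2).2⟩, ?_⟩, ?_, ?_⟩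
  · rcases C with ⟨C, h1, h2⟩
    rw [kneser_adj hk] at h1 h2
    rw [Finset.mem_powersetCard]
    refine ⟨?_, C.2⟩
    exact le_compl_iff_disjoint_right.mpr (disjoint_union_right.mpr ⟨h1.symm, h2.symm⟩)
  · rcases Finset.mem_powersetCard.mp D.2 with ⟨hsub, hcard⟩
    have hd := le_compl_iff_disjoint_right.mp hsub
    rw [disjoint_union_right] at hd
    exact ⟨(kneser_adj hk _ _).mpr hd.1.symm, (kneser_adj hk _ _).mpr hd.2.symm⟩
  · intro C; rfl
  · intro D; rfl

lemma N_iso (f : kneserGraph n k ≃g kneserGraph n k) (A B : KV n k) :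
    N (f A) (f B) = N A B := by
  apply Nat.card_congr
  exact (Equiv.subtypeEquiv f.toEquiv (fun C => by
    constructor
    · rintro ⟨h1, h2⟩; exact ⟨f.map_adj_iff.mpr h1, f.map_adj_iff.mpr h2⟩
    · rintro ⟨h1, h2⟩; exact ⟨f.map_adj_iff.mp h1, f.map_adj_iff.mp h2⟩)).symm

lemma inter_card_le (A B : KV n k) (h : A ≠ B) : (A.1 ∩ B.1).card ≤ k - 1 := by
  have hA := A.2
  have hB := B.2
  by_contra hlt
  push_neg at hlt
  have h1 : (A.1 ∩ B.1).card ≤ k := by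
    have := card_le_card (Finset.inter_subset_left (s₁ := A.1) (s₂ := B.1))
    omega
  have h2 : (A.1 ∩ B.1).card = k := by omega
  have h3 : A.1 ∩ B.1 = A.1 := eq_of_subset_of_card_le inter_subset_left (by omega)
  have hAB : A.1 ⊆ B.1 := by rw [← h3]; exact inter_subset_right
  exact h (Subtype.ext (eq_of_subset_of_card_le hAB (by omega)))

lemma union_card (A B : KV n k) : (A.1 ∪ B.1).card = 2 * k - (A.1 ∩ B.1).card := by
  have := Finset.card_union_add_card_inter A.1 B.1
  have hA := A.2
  have hB := B.2
  have h1 : (A.1 ∩ B.1).card ≤ k := by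
    have := card_le_card (Finset.inter_subset_left (s₁ := A.1) (s₂ := B.1))
    omega
  omega

lemma r_char (hk : 1 ≤ k) (hn : 2 * k < n) (A B : KV n k) :
    (A.1 ∩ B.1).card = k - 1 ↔ A ≠ B ∧ N A B = (n - k - 1).choose k := by
  have hNe := N_eq hk A B
  have hU := union_card A B
  constructor
  · intro h
    have hne : A ≠ B := by
      rintro rfl
      rw [Finset.inter_self, A.2] at h
      omega
    refine ⟨hne, ?_⟩
    rw [hNe, hU, h]
    congr 1
    omega
  · rintro ⟨hne, hN⟩
    have hle := inter_card_le A B hne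
    by_contra hlt
    have h2 : (A.1 ∩ B.1).card ≤ k - 2 := by omega
    have h3 : 2 ≤ k := by omega
    have hmono : (n - (A.1 ∪ B.1).card).choose k ≤ (n - k - 2).choose k := by
      apply Nat.choose_le_choose
      omega
    have hsplit : (n - k - 1).choose k
        = (n - k - 2).choose (k - 1) + (n - k - 2).choose k := by
      have hcs := Nat.choose_succ_succ (n - k - 2) (k - 1)
      rw [Nat.succ_eq_add_one, Nat.succ_eq_add_one, show k - 1 + 1 = k by omega] at hcs
      rw [show n - k - 1 = (n - k - 2) + 1 by omega]
      exact hcs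
    have hpos : 0 < (n - k - 2).choose (k - 1) :=
      Nat.choose_pos (by omega)
    rw [hNe] at hN
    omega

lemma r_preserved (hk : 1 ≤ k) (hn : 2 * k < n)
    (f : kneserGraph n k ≃g kneserGraph n k) (A B : KV n k)
    (h : (A.1 ∩ B.1).card = k - 1) : ((f A).1 ∩ (f B).1).card = k - 1 := by
  obtain ⟨hne, hN⟩ := (r_char hk hn A B).mp h
  refine (r_char hk hn (f A) (f B)).mpr ⟨fun he => hne (f.injective he), ?_⟩
  rw [N_iso f A B]
  exact hN

/-- Trichotomy lemma: three pairwise (k-1)-intersecting k-sets -/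
lemma trichotomy {A B C : Finset (Fin n)} (hk : 1 ≤ k)
    (hA : A.card = k) (hB : B.card = k) (hC : C.card = k)
    (hAB : (A ∩ B).card = k - 1) (hAC : (A ∩ C).card = k - 1)
    (hBC : (B ∩ C).card = k - 1) :
    A ∩ B ⊆ C ∨ C ⊆ A ∪ B := by
  by_cases hS : A ∩ B ⊆ C
  · exact Or.inl hS
  right
  obtain ⟨s, hsAB, hsC⟩ := not_subset.mp hS
  have hsA : s ∈ A := (mem_inter.mp hsAB).1
  have hsB : s ∈ B := (mem_inter.mp hsAB).2
  have eA : C ∩ A = A.erase s := by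
    apply eq_of_subset_of_card_le
    · intro x hx
      rw [mem_inter] at hx
      exact mem_erase.mpr ⟨fun h => hsC (h ▸ hx.1), hx.2⟩
    · rw [card_erase_of_mem hsA, hA, inter_comm, hAC]
  have eB : C ∩ B = B.erase s := by
    apply eq_of_subset_of_card_le
    · intro x hx
      rw [mem_inter] at hx
      exact mem_erase.mpr ⟨fun h => hsC (h ▸ hx.1), hx.2⟩
    · rw [card_erase_of_mem hsB, hB, inter_comm, hBC]
  have hUcard : (A ∪ B).card = k + 1 := by
    have := card_union_add_card_inter A B
    omega
  have eU : C ∩ (A ∪ B) = (A ∪ B).erase s := by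
    rw [inter_union_distrib_left, eA, eB, ← erase_union_distrib]
  have hcardCU : (C ∩ (A ∪ B)).card = k := by
    rw [eU, card_erase_of_mem (mem_union_left _ hsA), hUcard]
    omega
  have : C ∩ (A ∪ B) = C :=
    eq_of_subset_of_card_le inter_subset_left (by omega)
  rw [← this]
  exact inter_subset_right

/-- Big cliques have a common (k-1)-core. -/
lemma clique_core (hk : 2 ≤ k) (𝒞 : Finset (Finset (Fin n)))
    (h1 : ∀ C ∈ 𝒞, C.card = k)
    (h2 : ∀ C ∈ 𝒞, ∀ D ∈ 𝒞, C ≠ D → (C ∩ D).card = k - 1)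
    (h3 : k + 2 ≤ 𝒞.card) :
    ∃ S : Finset (Fin n), S.card = k - 1 ∧ ∀ C ∈ 𝒞, S ⊆ C := by
  have hk1 : 1 ≤ k := by omega
  obtain ⟨A, hAmem, B, hBmem, hne⟩ := Finset.one_lt_card.mp (show 1 < 𝒞.card by omega)
  have hA := h1 A hAmem
  have hB := h1 B hBmem
  have hScard : (A ∩ B).card = k - 1 := h2 A hAmem B hBmem hne
  have hUcard : (A ∪ B).card = k + 1 := by
    have := card_union_add_card_inter A B
    omega
  have hex : ∃ C₀ ∈ 𝒞, ¬ C₀ ⊆ A ∪ B := by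
    by_contra hcon
    push_neg at hcon
    have hsub : 𝒞 ⊆ (A ∪ B).powersetCard k := fun C hC =>
      mem_powersetCard.mpr ⟨hcon C hC, h1 C hC⟩
    have hcard := card_le_card hsub
    rw [card_powersetCard, hUcard, Nat.choose_succ_self_right] at hcard
    omega
  obtain ⟨C₀, hC₀mem, hC₀nsub⟩ := hex
  have hC₀A : C₀ ≠ A := by rintro rfl; exact hC₀nsub subset_union_left
  have hC₀B : C₀ ≠ B := by rintro rfl; exact hC₀nsub subset_union_right
  have hC₀ := h1 C₀ hC₀mem
  have hSC₀ : A ∩ B ⊆ C₀ := by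
    rcases trichotomy hk1 hA hB hC₀ hScard
      (h2 A hAmem C₀ hC₀mem (Ne.symm hC₀A)) (h2 B hBmem C₀ hC₀mem (Ne.symm hC₀B)) with h | h
    · exact h
    · exact absurd h hC₀nsub
  obtain ⟨c, hcC₀, hcAB⟩ := not_subset.mp hC₀nsub
  have hcS : c ∉ A ∩ B := fun h => hcAB (mem_union_left _ (mem_inter.mp h).1)
  have hC₀eq : C₀ = insert c (A ∩ B) := by
    refine (eq_of_subset_of_card_le ?_ ?_).symm
    · intro x hx
      rcases mem_insert.mp hx with rfl | hx
      · exact hcC₀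
      · exact hSC₀ hx
    · rw [card_insert_of_notMem hcS, hScard, hC₀]
      omega
  refine ⟨A ∩ B, hScard, fun C hC => ?_⟩
  by_cases hCA : C = A
  · subst hCA; exact inter_subset_left
  by_cases hCB : C = B
  · subst hCB; exact inter_subset_right
  by_cases hCC₀ : C = C₀
  · subst hCC₀; exact hSC₀
  have hCcard := h1 C hC
  rcases trichotomy hk1 hA hB hCcard hScard
    (h2 A hAmem C hC (Ne.symm hCA)) (h2 B hBmem C hC (Ne.symm hCB)) with h | h
  · exact h
  by_contra hnS
  obtain ⟨s, hsS, hsC⟩ := not_subset.mp hnS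
  have hcC : c ∉ C := fun hx => hcAB (h hx)
  have hint := h2 C hC C₀ hC₀mem hCC₀
  have hsubE : C ∩ C₀ ⊆ (A ∩ B).erase s := by
    intro x hx
    rw [mem_inter] at hx
    have hx2 : x ∈ insert c (A ∩ B) := hC₀eq ▸ hx.2
    rcases mem_insert.mp hx2 with rfl | hxS
    · exact absurd hx.1 hcC
    · exact mem_erase.mpr ⟨fun hxs => hsC (hxs ▸ hx.1), hxS⟩
  have hle := card_le_card hsubE
  rw [card_erase_of_mem hsS, hScard] at hle
  omega

def Q (f : kneserGraph n k ≃g kneserGraph n k) (S S' : Finset (Fin n)) : Prop :=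
  S'.card = k - 1 ∧ ∀ A : KV n k, S ⊆ A.1 → S' ⊆ (f A).1

/-- the star of `S` inside `KV n k` -/
noncomputable def star' (S : Finset (Fin n)) : Finset (KV n k) := by
  classical exact Finset.univ.filter (fun A => S ⊆ A.1)

lemma mem_star' {S : Finset (Fin n)} {A : KV n k} :
    A ∈ (star' S : Finset (KV n k)) ↔ S ⊆ A.1 := by
  simp [star']

lemma star'_card {S : Finset (Fin n)} (hS : S.card = k - 1) (hk : 1 ≤ k) (hkn : k ≤ n) :
    (star' S : Finset (KV n k)).card = n - k + 1 := by
  classical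
  have h := Finset.card_bij (s := (Sᶜ : Finset (Fin n))) (t := (star' S : Finset (KV n k)))
    (fun x hx => ⟨insert x S, by
      rw [card_insert_of_notMem (by simpa using hx), hS]; omega⟩)
    (fun x hx => mem_star'.mpr (subset_insert x S))
    (fun x hx y hy hxy => by
      have : insert x S = insert y S := congrArg Subtype.val hxy
      have hx' : x ∉ S := by simpa using hx
      have hy' : y ∉ S := by simpa using hy
      have : x ∈ insert y S := this ▸ mem_insert_self x S
      rcases mem_insert.mp this with h | h
      · exact h
      · exact absurd h hx')
    (fun A hA => by
      have hSA : S ⊆ A.1 := mem_star'.mp hA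
      have hd : (A.1 \ S).card = 1 := by
        rw [card_sdiff_of_subset hSA, A.2, hS]; omega
      obtain ⟨x, hx⟩ := Finset.card_eq_one.mp hd
      have hxA : x ∈ A.1 \ S := hx ▸ mem_singleton_self x
      refine ⟨x, by simpa using (mem_sdiff.mp hxA).2, ?_⟩
      apply Subtype.ext
      show insert x S = A.1
      have h2 : S ∪ {x} = A.1 := by rw [← hx]; exact union_sdiff_of_subset hSA
      rw [insert_eq, union_comm, h2])
  rw [← h, card_compl, hS]
  simp
  omega

lemma exists_Q (hk : 2 ≤ k) (hn : 2 * k < n)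
    (f : kneserGraph n k ≃g kneserGraph n k) {S : Finset (Fin n)}
    (hS : S.card = k - 1) : ∃ S', Q f S S' := by
  classical
  set 𝒞 : Finset (Finset (Fin n)) := (star' S).image (fun A => (f A).1) with h𝒞
  have hinj : Function.Injective (fun A : KV n k => (f A).1) := fun A A' h => by
    exact f.injective (Subtype.ext h)
  have h1 : ∀ C ∈ 𝒞, C.card = k := by
    intro C hC
    obtain ⟨A, _, rfl⟩ := mem_image.mp hC
    exact (f A).2
  have h2 : ∀ C ∈ 𝒞, ∀ D ∈ 𝒞, C ≠ D → (C ∩ D).card = k - 1 := by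
    intro C hC D hD hne
    obtain ⟨A, hA, rfl⟩ := mem_image.mp hC
    obtain ⟨A', hA', rfl⟩ := mem_image.mp hD
    have hAne : A ≠ A' := fun h => hne (by rw [h])
    have hint : (A.1 ∩ A'.1).card = k - 1 := by
      have hub := inter_card_le A A' hAne
      have hlb : S ⊆ A.1 ∩ A'.1 :=
        subset_inter (mem_star'.mp hA) (mem_star'.mp hA')
      have := card_le_card hlb
      omega
    exact r_preserved (by omega) hn f A A' hint
  have h3 : k + 2 ≤ 𝒞.card := by
    rw [h𝒞, card_image_of_injective _ hinj, star'_card hS (by omega) (by omega)]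
    omega
  obtain ⟨S', hS'card, hS'⟩ := clique_core hk 𝒞 h1 h2 h3
  exact ⟨S', hS'card, fun A hA =>
    hS' _ (mem_image_of_mem _ (mem_star'.mpr hA))⟩

lemma exists_pair (hk : 2 ≤ k) (hn : 2 * k < n) {S : Finset (Fin n)}
    (hS : S.card = k - 1) :
    ∃ A₁ A₂ : KV n k, S ⊆ A₁.1 ∧ S ⊆ A₂.1 ∧ A₁ ≠ A₂ ∧ A₁.1 ∩ A₂.1 = S := by
  classical
  have hcompl : 1 < (Sᶜ : Finset (Fin n)).card := by
    rw [card_compl, hS]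
    simp
    omega
  obtain ⟨x, hx, y, hy, hxy⟩ := Finset.one_lt_card.mp hcompl
  have hxS : x ∉ S := by simpa using hx
  have hyS : y ∉ S := by simpa using hy
  refine ⟨⟨insert x S, by rw [card_insert_of_notMem hxS, hS]; omega⟩,
          ⟨insert y S, by rw [card_insert_of_notMem hyS, hS]; omega⟩,
          subset_insert x S, subset_insert y S, ?_, ?_⟩
  · intro h
    have : insert x S = insert y S := congrArg Subtype.val h
    have hx' : x ∈ insert y S := this ▸ mem_insert_self x S
    rcases mem_insert.mp hx' with h' | h'
    · exact hxy h'
    · exact hxS h'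
  · show insert x S ∩ insert y S = S
    ext z
    simp only [mem_inter, mem_insert]
    constructor
    · rintro ⟨h1 | h1, h2 | h2⟩
      · exact absurd (h2.symm.trans h1).symm hxy
      · exact h2
      · exact h1
      · exact h1
    · intro h
      exact ⟨Or.inr h, Or.inr h⟩

lemma Q_inv (hk : 2 ≤ k) (hn : 2 * k < n)
    (f : kneserGraph n k ≃g kneserGraph n k) {S S' S'' : Finset (Fin n)}
    (hS : S.card = k - 1) (h1 : Q f S S') (h2 : Q f.symm S' S'') : S'' = S := by
  obtain ⟨A₁, A₂, hA₁, hA₂, hne, hint⟩ := exists_pair hk hn hS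
  have e1 : S'' ⊆ A₁.1 := by
    have := h2.2 (f A₁) (h1.2 A₁ hA₁)
    rwa [f.symm_apply_apply] at this
  have e2 : S'' ⊆ A₂.1 := by
    have := h2.2 (f A₂) (h1.2 A₂ hA₂)
    rwa [f.symm_apply_apply] at this
  have : S'' ⊆ S := hint ▸ subset_inter e1 e2
  exact eq_of_subset_of_card_le this (by rw [hS, h2.1])

lemma exists_disjoint_ext (hk : 1 ≤ k) (hn : 2 * k < n) {S T : Finset (Fin n)}
    (hS : S.card = k - 1) (hT : T.card = k - 1) (hd : Disjoint S T) :
    ∃ A A' : KV n k, S ⊆ A.1 ∧ T ⊆ A'.1 ∧ Disjoint A.1 A'.1 := by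
  classical
  have hU : (S ∪ T).card = 2 * k - 2 := by
    rw [card_union_of_disjoint hd, hS, hT]; omega
  have hcompl : 1 < ((S ∪ T)ᶜ : Finset (Fin n)).card := by
    rw [card_compl, Fintype.card_fin, hU]; omega
  obtain ⟨x, hx, y, hy, hxy⟩ := Finset.one_lt_card.mp hcompl
  rw [mem_compl, mem_union] at hx hy
  push_neg at hx hy
  refine ⟨⟨insert x S, by rw [card_insert_of_notMem hx.1, hS]; omega⟩,
          ⟨insert y T, by rw [card_insert_of_notMem hy.2, hT]; omega⟩,
          subset_insert x S, subset_insert y T, ?_⟩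
  show Disjoint (insert x S) (insert y T)
  rw [disjoint_left]
  intro z hz hz'
  rcases mem_insert.mp hz with rfl | hzS
  · rcases mem_insert.mp hz' with h | h
    · exact hxy h
    · exact hx.2 h
  · rcases mem_insert.mp hz' with rfl | h
    · exact hy.1 hzS
    · exact (disjoint_left.mp hd) hzS h

lemma step (hk : 2 ≤ k) (hn : 2 * k < n) (f : kneserGraph n k ≃g kneserGraph n k)
    (IH : ∀ g : kneserGraph n (k-1) ≃g kneserGraph n (k-1),
      ∃ π : Equiv.Perm (Fin n), ∀ S : KV n (k-1), (g S).1 = S.1.image π) :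
    ∃ π : Equiv.Perm (Fin n), ∀ A : KV n k, (f A).1 = A.1.image π := by
  classical
  have hk1 : 1 ≤ k := by omega
  have gdef : ∀ S : KV n (k-1), {S' : KV n (k-1) // Q f S.1 S'.1} := fun S =>
    ⟨⟨(exists_Q hk hn f S.2).choose, (exists_Q hk hn f S.2).choose_spec.1⟩,
     (exists_Q hk hn f S.2).choose_spec⟩
  have g'def : ∀ S : KV n (k-1), {S' : KV n (k-1) // Q f.symm S.1 S'.1} := fun S =>
    ⟨⟨(exists_Q hk hn f.symm S.2).choose, (exists_Q hk hn f.symm S.2).choose_spec.1⟩,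
     (exists_Q hk hn f.symm S.2).choose_spec⟩
  set g : KV n (k-1) → KV n (k-1) := fun S => (gdef S).1 with hg
  set g' : KV n (k-1) → KV n (k-1) := fun S => (g'def S).1 with hg'
  have hQ : ∀ S, Q f S.1 (g S).1 := fun S => (gdef S).2
  have hQ' : ∀ S, Q f.symm S.1 (g' S).1 := fun S => (g'def S).2
  have hgg' : ∀ S, g' (g S) = S := fun S =>
    Subtype.ext (Q_inv hk hn f S.2 (hQ S) (hQ' (g S)))
  have hg'g : ∀ S, g (g' S) = S := fun S =>
    Subtype.ext (Q_inv hk hn f.symm S.2 (hQ' S) (hQ (g' S)))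
  have dir1 : ∀ S T : KV n (k-1), Disjoint S.1 T.1 → Disjoint (g S).1 (g T).1 := by
    intro S T hd
    obtain ⟨A, A', hSA, hTA', hAA'⟩ := exists_disjoint_ext hk1 hn S.2 T.2 hd
    have hadj : (kneserGraph n k).Adj A A' := (kneser_adj hk1 A A').mpr hAA'
    have hadj' : (kneserGraph n k).Adj (f A) (f A') := f.map_adj_iff.mpr hadj
    have hd' := (kneser_adj hk1 _ _).mp hadj'
    exact hd'.mono ((hQ S).2 A hSA) ((hQ T).2 A' hTA')
  have dir1' : ∀ S T : KV n (k-1), Disjoint S.1 T.1 → Disjoint (g' S).1 (g' T).1 := by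
    intro S T hd
    obtain ⟨A, A', hSA, hTA', hAA'⟩ := exists_disjoint_ext hk1 hn S.2 T.2 hd
    have hadj : (kneserGraph n k).Adj A A' := (kneser_adj hk1 A A').mpr hAA'
    have hadj' : (kneserGraph n k).Adj (f.symm A) (f.symm A') := f.symm.map_adj_iff.mpr hadj
    have hd' := (kneser_adj hk1 _ _).mp hadj'
    exact hd'.mono ((hQ' S).2 A hSA) ((hQ' T).2 A' hTA')
  have mapIff : ∀ {S T : KV n (k-1)},
      (kneserGraph n (k-1)).Adj (g S) (g T) ↔ (kneserGraph n (k-1)).Adj S T := by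
    intro S T
    have hk1' : 1 ≤ k - 1 := by omega
    rw [kneser_adj hk1', kneser_adj hk1']
    constructor
    · intro hd
      have := dir1' (g S) (g T) hd
      rwa [hgg', hgg'] at this
    · exact dir1 S T
  obtain ⟨π, hπ⟩ := IH ⟨⟨g, g', hgg', hg'g⟩, mapIff⟩
  have hπ' : ∀ S : KV n (k-1), (g S).1 = S.1.image π := hπ
  refine ⟨π, fun A => ?_⟩
  have him : A.1.image π ⊆ (f A).1 := by
    intro z hz
    obtain ⟨a, ha, rfl⟩ := mem_image.mp hz
    obtain ⟨b, hb, hba⟩ := Finset.exists_mem_ne (by rw [A.2]; omega) a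
    have hScard : (A.1.erase b).card = k - 1 := by
      rw [card_erase_of_mem hb, A.2]
    have hsub : (g ⟨A.1.erase b, hScard⟩).1 ⊆ (f A).1 :=
      (hQ ⟨A.1.erase b, hScard⟩).2 A (erase_subset b A.1)
    apply hsub
    rw [hπ' ⟨A.1.erase b, hScard⟩]
    exact mem_image_of_mem π (mem_erase.mpr ⟨fun h => hba h.symm, ha⟩)
  have hcard : (f A).1.card ≤ (A.1.image π).card := by
    rw [(f A).2, card_image_of_injective _ π.injective, A.2]
  exact (eq_of_subset_of_card_le him hcard).symm

noncomputable def singEquiv (n : ℕ) : Fin n ≃ KV n 1 where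
  toFun a := ⟨{a}, rfl⟩
  invFun A := (Finset.card_eq_one.mp A.2).choose
  left_inv a := by
    have h := (Finset.card_eq_one.mp (⟨({a} : Finset (Fin n)), rfl⟩ : KV n 1).2).choose_spec
    exact (Finset.singleton_injective h.symm)
  right_inv A := Subtype.ext (Finset.card_eq_one.mp A.2).choose_spec.symm

lemma base_case (f : kneserGraph n 1 ≃g kneserGraph n 1) :
    ∃ π : Equiv.Perm (Fin n), ∀ A : KV n 1, (f A).1 = A.1.image π := by
  classical
  let e := singEquiv n
  refine ⟨e.trans (f.toEquiv.trans e.symm), fun A => ?_⟩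
  obtain ⟨a, ha⟩ := Finset.card_eq_one.mp A.2
  have hA : A = e a := Subtype.ext ha
  have h1 : A.1.image (e.trans (f.toEquiv.trans e.symm)) = {(e.symm (f (e a)) : Fin n)} := by
    rw [ha]
    simp
  rw [h1, hA]
  have h2 := (Finset.card_eq_one.mp (f (e a)).2).choose_spec
  exact h2.trans (by rw [show (Finset.card_eq_one.mp (f (e a)).2).choose = e.symm (f (e a)) from rfl])

theorem key (k : ℕ) : ∀ n, 1 ≤ k → 2 * k < n →
    ∀ f : kneserGraph n k ≃g kneserGraph n k,
    ∃ π : Equiv.Perm (Fin n), ∀ A : KV n k, (f A).1 = A.1.image π := by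
  induction k using Nat.strong_induction_on with
  | _ k IH =>
    intro n hk hn f
    rcases Nat.lt_or_ge k 2 with h2 | h2
    · have hk1 : k = 1 := by omega
      subst hk1
      exact base_case f
    · exact step h2 hn f (fun gg => IH (k-1) (by omega) n (by omega) (by omega) gg)

def permMap (π : Equiv.Perm (Fin n)) : kneserGraph n k ≃g kneserGraph n k where
  toFun A := ⟨A.1.image π, by rw [card_image_of_injective _ π.injective, A.2]⟩
  invFun A := ⟨A.1.image π.symm, by rw [card_image_of_injective _ π.symm.injective, A.2]⟩
  left_inv A := by
    apply Subtype.ext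
    simp [image_image]
  right_inv A := by
    apply Subtype.ext
    simp [image_image]
  map_rel_iff' := by
    intro A B
    show (kneserGraph n k).Adj _ _ ↔ (kneserGraph n k).Adj A B
    rw [kneserGraph, SimpleGraph.fromRel_adj, SimpleGraph.fromRel_adj,
      ne_eq, ne_eq, Subtype.ext_iff, Subtype.ext_iff]
    show ¬A.1.image π = B.1.image π ∧ _ ↔ _
    rw [(Finset.image_injective π.injective).eq_iff]
    constructor
    · rintro ⟨h1, h2 | h2⟩
      · exact ⟨h1, Or.inl ((disjoint_image π.injective).mp h2)⟩
      · exact ⟨h1, Or.inr ((disjoint_image π.injective).mp h2)⟩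
    · rintro ⟨h1, h2 | h2⟩
      · exact ⟨h1, Or.inl ((disjoint_image π.injective).mpr h2)⟩
      · exact ⟨h1, Or.inr ((disjoint_image π.injective).mpr h2)⟩

lemma permMap_mul (π σ : Equiv.Perm (Fin n)) :
    (permMap (π * σ) : kneserGraph n k ≃g kneserGraph n k) = permMap π * permMap σ := by
  apply RelIso.ext
  intro A
  apply Subtype.ext
  show A.1.image (π * σ) = (A.1.image σ).image π
  rw [image_image]
  rfl

end KneserAut

/-- For `k ≥ 1` and `n > 2k`, the automorphism group of the Kneser graph
`K(n,k)` is isomorphic to `Sym_n`, the isomorphism being induced by the action of permutations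
of `{1,…,n}` on `k`-element subsets. -/
theorem stmt_3 (n k : ℕ) (hk : 1 ≤ k) (hn : 2 * k < n) :
    ∃ e : Equiv.Perm (Fin n) ≃* (kneserGraph n k ≃g kneserGraph n k),
      ∀ (π : Equiv.Perm (Fin n)) (A : {A : Finset (Fin n) // A.card = k}),
        ((e π) A : Finset (Fin n)) = A.1.image π := by
  classical
  open KneserAut in
  let φ : Equiv.Perm (Fin n) →* (kneserGraph n k ≃g kneserGraph n k) :=
    MonoidHom.mk' (fun π => KneserAut.permMap π) KneserAut.permMap_mul
  have hinj : Function.Injective φ := by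
    rw [injective_iff_map_eq_one]
    intro π hπ
    refine Equiv.ext fun a => ?_
    show π a = a
    by_contra hne
    have hsub0 : ({a} : Finset (Fin n)) ⊆ ({π a} : Finset (Fin n))ᶜ := by
      intro z hz
      rw [Finset.mem_singleton] at hz
      subst hz
      simp only [Finset.mem_compl, Finset.mem_singleton]
      exact fun h => hne (by rw [← h])
    obtain ⟨A, hsub, hsub2, hcard⟩ := Finset.exists_subsuperset_card_eq hsub0
      (by simpa using hk)
      (by rw [Finset.card_compl, Fintype.card_fin, Finset.card_singleton]; omega)
    have himg := congrArg (fun F : kneserGraph n k ≃g kneserGraph n k =>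
      ((F ⟨A, hcard⟩ : KneserAut.KV n k) : Finset (Fin n))) hπ
    have himg' : A.image π = A := himg
    have hmem : π a ∈ A.image π :=
      Finset.mem_image_of_mem _ (hsub (Finset.mem_singleton_self a))
    rw [himg'] at hmem
    have := hsub2 hmem
    rw [Finset.mem_compl] at this
    exact this (Finset.mem_singleton_self _)
  have hsurj : Function.Surjective φ := by
    intro f
    obtain ⟨π, hπ⟩ := KneserAut.key k n hk hn f
    exact ⟨π, RelIso.ext fun A => Subtype.ext (hπ A).symm⟩
  exact ⟨MulEquiv.ofBijective φ ⟨hinj, hsurj⟩, fun π A => rfl⟩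
end

section
/- A connected simple graph Γ is locally the graph on two nonadjacent vertices (i.e. every vertex has exactly two neighbors and these two neighbors are nonadjacent) if and only if Γ is isomorphic to the cycle graph C_n for some finite n ≥ 4 or to the infinite cycle C_∞, the graph on the integers ℤ in which x and y are adjacent iff |x − y| = 1. -/
/-!
Since every vertex has exactly two neighbours, continuing a dart without ever backtracking gives
a bi-infinite walk `f : ℤ → Γ` which is a covering map `C_∞ → Γ`, surjective by connectedness.
If `f x = f y`, then `n ↦ f (y + n)` is a covering that agrees at `0` and `1` either with
`n ↦ f (x + n)` or with `n ↦ f (x - n)`, hence equals it. The second case would make `f`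
symmetric about a point, forcing it to backtrack or to stand still, so `y - x` is a period of `f`.
Hence the fibres of `f` are the cosets of `pℤ` and `Γ` is the Cayley graph of `ℤ/pℤ` with
generator `1`. Here `p ≠ 1, 2` since `f` neither stands still nor backtracks, and `p ≠ 3` since a
locally edgeless graph has no triangles. Conversely, the neighbours `x ± 1` of `x` in such a
Cayley graph are distinct and nonadjacent as soon as `p ∉ {1, 2, 3}`.
-/

/-- The infinite cycle `C_∞`: the graph on `ℤ` in which `x` and `y` are adjacent
iff `|x - y| = 1`. -/
def intCycle : SimpleGraph ℤ :=
  SimpleGraph.fromRel fun x y => x = y + 1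

open Function

namespace SimpleGraph

variable {V W X : Type*} {Γ : SimpleGraph V}

def IsLocally (Γ : SimpleGraph V) (Λ : SimpleGraph W) : Prop :=
  ∀ v, Nonempty (Γ.induce (Γ.neighborSet v) ≃g Λ)

theorem IsLocally.of_iso {Γ' : SimpleGraph W} {Λ : SimpleGraph X} (e : Γ ≃g Γ')
    (h : Γ'.IsLocally Λ) : Γ.IsLocally Λ := fun v =>
  let ⟨φ⟩ := h (e v)
  ⟨(e.induce (e.toEquiv.bijOn fun _ => e.apply_mem_neighborSet_iff)).trans φ⟩

theorem IsLocally.isCycles {Λ : SimpleGraph (Fin 2)} (h : Γ.IsLocally Λ) : Γ.IsCycles := by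
  intro v _
  obtain ⟨φ⟩ := h v
  rw [← Nat.card_coe_set_eq, Nat.card_congr φ.toEquiv, Nat.card_eq_fintype_card,
    Fintype.card_fin]

theorem IsLocally.cliqueFree_three (h : Γ.IsLocally (⊥ : SimpleGraph W)) : Γ.CliqueFree 3 := by
  classical
  intro t ht
  obtain ⟨a, b, c, hab, hac, hbc, -⟩ := is3Clique_iff.mp ht
  obtain ⟨φ⟩ := h a
  simpa using (φ.map_adj_iff (v := ⟨b, hab⟩) (w := ⟨c, hac⟩)).mpr hbc

theorem nonempty_induce_pair_iso_bot {a b : V} (hab : a ≠ b) (hnadj : ¬Γ.Adj a b) :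
    Nonempty (Γ.induce {a, b} ≃g (⊥ : SimpleGraph (Fin 2))) := by
  refine ⟨⟨Finite.equivFinOfCardEq (by rw [Nat.card_coe_set_eq, Set.ncard_pair hab]), ?_⟩⟩
  rintro ⟨x, rfl | rfl⟩ ⟨y, rfl | rfl⟩ <;> simp [hnadj, mt Adj.symm hnadj]

/-- A covering map `C_∞ → Γ`: `f` maps the neighbours `n ± 1` of `n` bijectively onto the
neighbours of `f n`. -/
structure IsIntCover (Γ : SimpleGraph V) (f : ℤ → V) : Prop where
  ne : ∀ n, f (n - 1) ≠ f (n + 1)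
  neighborSet_eq : ∀ n, Γ.neighborSet (f n) = {f (n - 1), f (n + 1)}

namespace IsIntCover

variable {f : ℤ → V} (hf : Γ.IsIntCover f)
include hf

theorem adj_iff {n : ℤ} {w : V} : Γ.Adj (f n) w ↔ w = f (n - 1) ∨ w = f (n + 1) := by
  rw [← mem_neighborSet, hf.neighborSet_eq]; rfl

theorem adj_add_one (n : ℤ) : Γ.Adj (f n) (f (n + 1)) :=
  hf.adj_iff.mpr (.inr rfl)

theorem comp_add_left (c : ℤ) : Γ.IsIntCover (fun n => f (c + n)) where
  ne n := by simpa only [add_sub_assoc', add_assoc] using hf.ne (c + n)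
  neighborSet_eq n := by simpa only [add_sub_assoc', add_assoc] using hf.neighborSet_eq (c + n)

theorem comp_sub_left (c : ℤ) : Γ.IsIntCover (fun n => f (c - n)) := by
  have e (n : ℤ) : c - (n - 1) = c - n + 1 ∧ c - (n + 1) = c - n - 1 := by constructor <;> ring
  refine ⟨fun n => ?_, fun n => ?_⟩ <;> simp only [(e n).1, (e n).2]
  · exact (hf.ne (c - n)).symm
  · rw [Set.pair_comm]; exact hf.neighborSet_eq (c - n)

theorem ext {g : ℤ → V} (hg : Γ.IsIntCover g) (h0 : f 0 = g 0) (h1 : f 1 = g 1) : f = g := by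
  have up : ∀ n, f n = g n → f (n + 1) = g (n + 1) → f (n + 1 + 1) = g (n + 1 + 1) := by
    intro n hn hn1
    have hfn := hf.neighborSet_eq (n + 1)
    have hgn := hg.neighborSet_eq (n + 1)
    have hne := hf.ne (n + 1)
    simp only [add_sub_cancel_right] at hfn hgn hne
    rw [hn1, hgn, hn, Set.pair_eq_pair_iff] at hfn
    grind
  have down : ∀ n, f n = g n → f (n + 1) = g (n + 1) → f (n - 1) = g (n - 1) := by
    intro n hn hn1
    have hfn := hf.neighborSet_eq n
    have hne := hg.ne n
    rw [hn, hg.neighborSet_eq, hn1, Set.pair_eq_pair_iff] at hfn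
    grind
  suffices ∀ n, f n = g n ∧ f (n + 1) = g (n + 1) from funext fun n => (this n).1
  intro n
  induction n using Int.induction_on with
  | zero => exact ⟨h0, h1⟩
  | succ n ih => exact ⟨ih.2, up n ih.1 ih.2⟩
  | pred n ih => exact ⟨down _ ih.1 ih.2, by simpa using ih.1⟩

theorem not_forall_sub_eq (c : ℤ) : ¬∀ n, f (c - n) = f n := by
  intro h
  obtain ⟨t, rfl | rfl⟩ := Int.even_or_odd' c
  · exact hf.ne t (by rw [← h (t + 1)]; ring_nf)
  · exact (hf.adj_add_one t).ne (by rw [← h t]; ring_nf)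

theorem periodic_sub_of_eq {x y : ℤ} (h : f x = f y) : Periodic f (y - x) := by
  have hy : Γ.neighborSet (f y) = {f (x - 1), f (x + 1)} := h ▸ hf.neighborSet_eq x
  have h1 : f (y + 1) ∈ ({f (x - 1), f (x + 1)} : Set V) := hy ▸ hf.adj_add_one y
  rcases h1 with h1 | h1
  · have := hf.comp_add_left y |>.ext (hf.comp_sub_left x) (by simpa using h.symm)
      (by simpa using h1)
    exact (hf.not_forall_sub_eq (x + y) fun n => by
      convert congrFun this (x - n) using 2 <;> ring).elim
  · have := hf.comp_add_left y |>.ext (hf.comp_add_left x) (by simpa using h.symm)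
      (by simpa using h1)
    intro n
    convert congrFun this (n - x) using 2 <;> ring

theorem eq_iff_periodic_sub {x y : ℤ} : f x = f y ↔ Periodic f (y - x) :=
  ⟨hf.periodic_sub_of_eq, fun h => by simpa using (h x).symm⟩

theorem exists_eq_iff_intCast_eq : ∃ p : ℕ, ∀ x y, f x = f y ↔ (x : ZMod p) = y := by
  let periods : AddSubgroup ℤ :=
    { carrier := {c | Periodic f c}
      add_mem' := Periodic.add_period
      zero_mem' := fun _ => by simp
      neg_mem' := Periodic.neg }
  obtain ⟨a, ha⟩ := Int.subgroup_cyclic periods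
  refine ⟨a.natAbs, fun x y => ?_⟩
  rw [ZMod.intCast_eq_intCast_iff_dvd_sub, Int.natAbs_dvd, ← Int.mem_zmultiples_iff,
    AddSubgroup.zmultiples_eq_closure, ← ha]
  exact hf.eq_iff_periodic_sub

theorem surjective (hΓ : Γ.Preconnected) : Surjective f := by
  have key : ∀ u v (w : Γ.Walk u v), u ∈ Set.range f → v ∈ Set.range f := by
    intro u v w
    induction w with
    | nil => exact id
    | cons hadj _ ih =>
      rintro ⟨n, rfl⟩
      rcases hf.adj_iff.mp hadj with rfl | rfl
      exacts [ih ⟨_, rfl⟩, ih ⟨_, rfl⟩]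
  intro v
  exact key _ v (hΓ (f 0) v).some ⟨0, rfl⟩

theorem ne_add_three (h3 : Γ.CliqueFree 3) (n : ℤ) : f n ≠ f (n + 3) := by
  classical
  intro h
  have h23 := hf.adj_add_one (n + 1 + 1)
  rw [show n + 1 + 1 + 1 = n + 3 by ring, ← h] at h23
  exact h3 _ (is3Clique_triple_iff.mpr ⟨hf.adj_add_one n, h23.symm, hf.adj_add_one (n + 1)⟩)

theorem eq_zero_or_four_le (h3 : Γ.CliqueFree 3) {p : ℕ}
    (hp : ∀ x y, f x = f y ↔ (x : ZMod p) = y) : p = 0 ∨ 4 ≤ p := by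
  have hdvd (k : ℕ) (hk : f 0 ≠ f k) : ¬p ∣ k := by
    rwa [Ne, hp, Int.cast_zero, Int.cast_natCast, eq_comm, ZMod.natCast_eq_zero_iff] at hk
  have h1 := hdvd 1 (by simpa using (hf.adj_add_one 0).ne)
  have h2 := hdvd 2 (by simpa using hf.ne 1)
  have h3 := hdvd 3 (by simpa using hf.ne_add_three h3 0)
  by_contra! hp'
  obtain ⟨hp0, hp4⟩ := hp'
  interval_cases p <;> simp_all

theorem nonempty_iso_circulantGraph (hsurj : Surjective f) {G : Type*} [AddCommGroup G]
    (π : ℤ →+ G) (hπ : Surjective π) (hfib : ∀ x y, f x = f y ↔ π x = π y) :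
    Nonempty (Γ ≃g circulantGraph {π 1}) := by
  have hfπ (n : ℤ) : f (surjInv hπ (π n)) = f n := (hfib _ _).mpr (surjInv_eq hπ _)
  have hπ1 : π 1 ≠ 0 := by simpa [eq_comm] using (hfib 0 1).not.mp (hf.adj_add_one 0).ne
  let e : G ≃ V := Equiv.ofBijective (f ∘ surjInv hπ)
    ⟨fun a b h => by simpa [surjInv_eq hπ] using (hfib _ _).mp h,
      fun v => by obtain ⟨n, rfl⟩ := hsurj v; exact ⟨π n, hfπ n⟩⟩
  refine ⟨(RelIso.mk e fun {a b} => ?_).symm⟩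
  obtain ⟨x, rfl⟩ := hπ a
  obtain ⟨y, rfl⟩ := hπ b
  change Γ.Adj (f (surjInv hπ (π x))) (f (surjInv hπ (π y))) ↔ _
  simp only [hfπ, hf.adj_iff, hfib, map_sub, map_add, circulantGraph_adj, Set.mem_singleton_iff]
  grind

end IsIntCover

namespace IsCycles

/-- The dart leaving `d.snd` towards its neighbour other than `d.fst`. -/
noncomputable def nextDart (hΓ : Γ.IsCycles) (d : Γ.Dart) : Γ.Dart :=
  ⟨(d.snd, (hΓ.existsUnique_ne_adj d.adj.symm).exists.choose),
    (hΓ.existsUnique_ne_adj d.adj.symm).exists.choose_spec.2⟩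

variable (hΓ : Γ.IsCycles)
include hΓ

theorem neighborSet_eq_pair {v u w : V} (hu : Γ.Adj v u) (hw : Γ.Adj v w) (huw : u ≠ w) :
    Γ.neighborSet v = {u, w} := by
  refine (Set.eq_of_subset_of_ncard_le ?_ ?_ (Set.finite_of_ncard_ne_zero ?_)).symm
  · simp [Set.insert_subset_iff, hu, hw]
  · rw [hΓ ⟨u, hu⟩, Set.ncard_pair huw]
  · rw [hΓ ⟨u, hu⟩]; norm_num

theorem nextDart_fst (d : Γ.Dart) : (hΓ.nextDart d).fst = d.snd := rfl

theorem fst_ne_nextDart_snd (d : Γ.Dart) : d.fst ≠ (hΓ.nextDart d).snd :=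
  (hΓ.existsUnique_ne_adj d.adj.symm).exists.choose_spec.1

theorem neighborSet_snd (d : Γ.Dart) : Γ.neighborSet d.snd = {d.fst, (hΓ.nextDart d).snd} :=
  hΓ.neighborSet_eq_pair d.adj.symm (hΓ.nextDart d).adj (hΓ.fst_ne_nextDart_snd d)

theorem nextDart_symm_nextDart (d : Γ.Dart) : hΓ.nextDart (hΓ.nextDart d).symm = d.symm := by
  ext
  · rfl
  · have h1 : Γ.neighborSet d.snd =
        {(hΓ.nextDart d).snd, (hΓ.nextDart (hΓ.nextDart d).symm).snd} :=
      hΓ.neighborSet_snd (hΓ.nextDart d).symm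
    have h2 : (hΓ.nextDart d).snd ≠ (hΓ.nextDart (hΓ.nextDart d).symm).snd :=
      hΓ.fst_ne_nextDart_snd (hΓ.nextDart d).symm
    rw [hΓ.neighborSet_snd d, Set.pair_eq_pair_iff] at h1
    have h3 := hΓ.fst_ne_nextDart_snd d
    change _ = d.fst
    grind

noncomputable def rotate : Equiv.Perm Γ.Dart where
  toFun := hΓ.nextDart
  invFun d := (hΓ.nextDart d.symm).symm
  left_inv d := by simp only [nextDart_symm_nextDart, Dart.symm_symm]
  right_inv d := (hΓ.nextDart_symm_nextDart d.symm).trans d.symm_symm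

theorem exists_isIntCover (d : Γ.Dart) : ∃ f, Γ.IsIntCover f := by
  set σ := hΓ.rotate
  have hσ : ∀ n : ℤ, (σ ^ (n + 1)) d = hΓ.nextDart ((σ ^ n) d) := fun n => by
    rw [add_comm, zpow_add, zpow_one, Equiv.Perm.mul_apply]; rfl
  refine ⟨fun n => ((σ ^ n) d).fst, ⟨fun n => ?_, fun n => ?_⟩⟩ <;>
    obtain ⟨m, rfl⟩ : ∃ m, n = m + 1 := ⟨n - 1, by ring⟩ <;>
    simp only [add_sub_cancel_right, hσ, nextDart_fst]
  exacts [hΓ.fst_ne_nextDart_snd _, hΓ.neighborSet_snd _]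

end IsCycles

theorem isLocally_circulantGraph_singleton {G : Type*} [AddCommGroup G] {g : G}
    (h2 : 2 • g ≠ 0) (h3 : 3 • g ≠ 0) :
    (circulantGraph {g}).IsLocally (⊥ : SimpleGraph (Fin 2)) := by
  intro x
  have hnbr : (circulantGraph {g}).neighborSet x = {x - g, x + g} := by
    ext y
    simp only [mem_neighborSet, circulantGraph_adj, Set.mem_singleton_iff, Set.mem_insert_iff]
    grind
  rw [hnbr]
  refine nonempty_induce_pair_iso_bot (by grind) ?_
  simp only [circulantGraph_adj, Set.mem_singleton_iff]
  grind

theorem isLocally_circulantGraph_one_zmod {p : ℕ} (hp : p = 0 ∨ 4 ≤ p) :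
    (circulantGraph {(1 : ZMod p)}).IsLocally (⊥ : SimpleGraph (Fin 2)) := by
  have hndvd (k : ℕ) (hk : k < 4) (hk0 : k ≠ 0) : k • (1 : ZMod p) ≠ 0 := by
    rw [nsmul_one, Ne, ZMod.natCast_eq_zero_iff]
    rintro hdvd
    rcases hp with rfl | hp
    · exact hk0 (Nat.eq_zero_of_zero_dvd hdvd)
    · have := Nat.le_of_dvd (Nat.pos_of_ne_zero hk0) hdvd
      omega
  exact isLocally_circulantGraph_singleton (hndvd 2 (by norm_num) two_ne_zero)
    (hndvd 3 (by norm_num) three_ne_zero)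

/-- `ZMod 0 = ℤ`, so `p = 0` is the infinite cycle. -/
theorem Connected.isLocally_bot_fin_two_iff (hΓ : Γ.Connected) :
    Γ.IsLocally (⊥ : SimpleGraph (Fin 2)) ↔
      ∃ p : ℕ, (p = 0 ∨ 4 ≤ p) ∧ Nonempty (Γ ≃g circulantGraph {(1 : ZMod p)}) := by
  refine ⟨fun h => ?_, fun ⟨p, hp, ⟨e⟩⟩ => (isLocally_circulantGraph_one_zmod hp).of_iso e⟩
  obtain ⟨v⟩ := hΓ.nonempty
  obtain ⟨φ⟩ := h v
  obtain ⟨f, hf⟩ := h.isCycles.exists_isIntCover ⟨(v, φ.symm 0), (φ.symm 0).2⟩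
  obtain ⟨p, hp⟩ := hf.exists_eq_iff_intCast_eq
  refine ⟨p, hf.eq_zero_or_four_le h.cliqueFree_three hp, ?_⟩
  simpa using hf.nonempty_iso_circulantGraph (hf.surjective hΓ.preconnected)
    (Int.castAddHom (ZMod p)) ZMod.intCast_surjective hp

end SimpleGraph

open SimpleGraph

theorem intCycle_eq_circulantGraph : intCycle = circulantGraph {(1 : ZMod 0)} := by
  ext x y
  change intCycle.Adj x y ↔ (circulantGraph ({1} : Set ℤ)).Adj x y
  simp only [intCycle, fromRel_adj, circulantGraph_adj, Set.mem_singleton_iff]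
  omega

theorem nonempty_iso_cycleGraph_or_intCycle_iff {V : Type*} {Γ : SimpleGraph V} :
    ((∃ n : ℕ, 4 ≤ n ∧ Nonempty (Γ ≃g cycleGraph n)) ∨ Nonempty (Γ ≃g intCycle)) ↔
      ∃ p : ℕ, (p = 0 ∨ 4 ≤ p) ∧ Nonempty (Γ ≃g circulantGraph {(1 : ZMod p)}) := by
  have hcyc (m : ℕ) : cycleGraph (m + 1) = circulantGraph {(1 : ZMod (m + 1))} :=
    cycleGraph_eq_circulantGraph m
  constructor
  · rintro (⟨n, hn, e⟩ | e)
    · obtain ⟨m, rfl⟩ : ∃ m, n = m + 1 := ⟨n - 1, by omega⟩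
      exact ⟨m + 1, .inr hn, by rwa [hcyc] at e⟩
    · exact ⟨0, .inl rfl, by rwa [intCycle_eq_circulantGraph] at e⟩
  · rintro ⟨_ | m, hp, e⟩
    · exact .inr (by rwa [intCycle_eq_circulantGraph])
    · exact .inl ⟨m + 1, by omega, by rwa [hcyc]⟩

/-- A connected simple graph is locally the graph on two nonadjacent
vertices if and only if it is isomorphic to a cycle `C_n` with `4 ≤ n` finite, or to the
infinite cycle `C_∞` on `ℤ`. -/
theorem stmt_5 {V : Type*} (Γ : SimpleGraph V) (hΓ : Γ.Connected) :
    (∀ v : V, Nonempty (Γ.induce (Γ.neighborSet v) ≃g (⊥ : SimpleGraph (Fin 2)))) ↔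
      ((∃ n : ℕ, 4 ≤ n ∧ Nonempty (Γ ≃g SimpleGraph.cycleGraph n)) ∨
        Nonempty (Γ ≃g intCycle)) := by
  rw [nonempty_iso_cycleGraph_or_intCycle_iff]
  exact hΓ.isLocally_bot_fin_two_iff
end

section
/- Let Γ₁ and Γ₂ be simple graphs, each with nonempty vertex set. Then the chromatic number of the Cartesian product Γ₁ □ Γ₂ equals the maximum of the chromatic numbers of Γ₁ and Γ₂. -/
/-!
Each factor embeds in `Γ₁ □ Γ₂` as a fibre, so `χ(Γ₁ □ Γ₂)` is at least both chromatic numbers.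
Conversely, if both factors are colored in `Fin n`, coloring `(x, y)` by the sum `c₁ x + c₂ y` in
`Fin n` is proper: along an edge one coordinate is fixed, and addition in `Fin n` is cancellative.
-/

namespace SimpleGraph

variable {V₁ V₂ α : Type*} {Γ₁ : SimpleGraph V₁} {Γ₂ : SimpleGraph V₂}

def Coloring.boxProd [Add α] [IsCancelAdd α] (c₁ : Γ₁.Coloring α) (c₂ : Γ₂.Coloring α) :
    (Γ₁ □ Γ₂).Coloring α :=
  Coloring.mk (fun x => c₁ x.1 + c₂ x.2) <| by
    rintro ⟨x₁, y₁⟩ ⟨x₂, y₂⟩ (⟨hx, rfl⟩ | ⟨hy, rfl⟩) hc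
    · exact c₁.valid hx (add_right_cancel hc)
    · exact c₂.valid hy (add_left_cancel hc)

theorem Colorable.boxProd {n : ℕ} (h₁ : Γ₁.Colorable n) (h₂ : Γ₂.Colorable n) :
    (Γ₁ □ Γ₂).Colorable n :=
  ⟨h₁.some.boxProd h₂.some⟩

theorem chromaticNumber_boxProd_le :
    (Γ₁ □ Γ₂).chromaticNumber ≤ max Γ₁.chromaticNumber Γ₂.chromaticNumber := by
  rcases eq_or_ne (max Γ₁.chromaticNumber Γ₂.chromaticNumber) ⊤ with h | h
  · simp [h]
  obtain ⟨n, hn⟩ := ENat.ne_top_iff_exists.mp h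
  obtain ⟨h₁, h₂⟩ := max_le_iff.mp hn.ge
  rw [← hn]
  exact ((chromaticNumber_le_iff_colorable.mp h₁).boxProd
    (chromaticNumber_le_iff_colorable.mp h₂)).chromaticNumber_le

theorem chromaticNumber_le_boxProd_left [Nonempty V₂] :
    Γ₁.chromaticNumber ≤ (Γ₁ □ Γ₂).chromaticNumber :=
  chromaticNumber_mono_of_hom (Γ₁.boxProdLeft Γ₂ (Classical.arbitrary V₂)).toHom

theorem chromaticNumber_le_boxProd_right [Nonempty V₁] :
    Γ₂.chromaticNumber ≤ (Γ₁ □ Γ₂).chromaticNumber :=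
  chromaticNumber_mono_of_hom (Γ₁.boxProdRight Γ₂ (Classical.arbitrary V₁)).toHom

end SimpleGraph

/-- For simple graphs `Γ₁`, `Γ₂` on nonempty vertex sets, the chromatic
number of the Cartesian (box) product `Γ₁ □ Γ₂` is the maximum of the chromatic numbers of
`Γ₁` and `Γ₂`. -/
theorem stmt_7 {V₁ V₂ : Type*} [Nonempty V₁] [Nonempty V₂]
    (Γ₁ : SimpleGraph V₁) (Γ₂ : SimpleGraph V₂) :
    (Γ₁ □ Γ₂).chromaticNumber = max Γ₁.chromaticNumber Γ₂.chromaticNumber :=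
  le_antisymm SimpleGraph.chromaticNumber_boxProd_le
    (max_le SimpleGraph.chromaticNumber_le_boxProd_left
      SimpleGraph.chromaticNumber_le_boxProd_right)
end

section
/- The Coxeter group W(F₄) of type F₄ is isomorphic to a semidirect product of the Coxeter group W(D₄) of type D₄ by the symmetric group Sym₃: there exists a group homomorphism φ from Sym₃ to the automorphism group of W(D₄) such that W(F₄) is isomorphic to the semidirect product W(D₄) ⋊_φ Sym₃. -/
/-- The Coxeter matrix of type `D₄`: a central vertex (index 1) joined by edges of label `3`
to the three vertices 0, 2, 3, which pairwise commute (label `2`). -/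
def coxMatD4 : CoxeterMatrix (Fin 4) where
  M := !![1, 3, 2, 2;
          3, 1, 3, 3;
          2, 3, 1, 2;
          2, 3, 2, 1]
  off_diagonal := by intro i i' h; fin_cases i <;> fin_cases i' <;> simp_all

/-!
Write `s 0, …, s 3` for the generators of `W(F₄)` and `t 0, …, t 3` for those of `W(D₄)`.
In `W(F₄)` the elements `s 1, s 0, s 2 s 1 s 2, s 3 s 2 s 1 s 2 s 3` satisfy the `D₄` relations:
conjugation by `s 2` and by `s 3` permutes them like the diagram automorphisms `(0 2)` and
`(2 3)` of `D₄`, so every relation is a conjugate of `(s 1 s 0)³ = 1` or `(s 1 s 2)⁴ = 1`.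
Together with `Sym₃ ≅ W(A₂) → W(F₄)`, sending the two Coxeter generators to `s 2, s 3`, this
gives a homomorphism `W(D₄) ⋊ Sym₃ → W(F₄)`. Conversely `s 0, s 1, s 2, s 3 ↦ t 1, t 0, (0 1),
(1 2)` respects the `F₄` relations; the only one that needs thought is `(s 1 s 2)⁴ = 1`, which
holds because `(t 0 · (0 1))² = t 0 t 2`. The two homomorphisms are inverse on generators.
-/

open Equiv CoxeterSystem SemidirectProduct

section CoxeterRelations

variable {B W : Type*} [Group W] {M : CoxeterMatrix B} (cs : CoxeterSystem M W)

theorem CoxeterSystem.commute_simple_of_eq_two {i j : B} (h : M i j = 2) :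
    Commute (cs.simple i) (cs.simple j) := by
  have := cs.wordProd_braidWord_eq j i
  rw [braidWord, braidWord, M.symmetric j i, h] at this
  simp [alternatingWord, wordProd] at this
  exact this.symm

theorem CoxeterSystem.simple_braid_of_eq_three {i j : B} (h : M i j = 3) :
    cs.simple i * cs.simple j * cs.simple i = cs.simple j * cs.simple i * cs.simple j := by
  have := cs.wordProd_braidWord_eq j i
  rw [braidWord, braidWord, M.symmetric j i, h] at this
  simpa [alternatingWord, wordProd, mul_assoc] using this

theorem CoxeterMatrix.isLiftable_of_lt [LinearOrder B] {G : Type*} [Group G] {f : B → G}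
    (hsq : ∀ i, f i * f i = 1) (h : ∀ i j, i < j → (f i * f j) ^ M i j = 1) :
    M.IsLiftable f := by
  intro i j
  rcases lt_trichotomy i j with hij | rfl | hij
  · exact h i j hij
  · rw [M.diagonal, pow_one, hsq]
  · have hconj : MulAut.conj (f j)⁻¹ (f j * f i) = f i * f j := by simp
    rw [M.symmetric, ← hconj, ← map_pow, h j i hij, map_one]

end CoxeterRelations

theorem mul_pow_eq_one_of_conj {G ι : Type*} [Group G] {u : ι → G} {π : ι → ι} {c : G}
    (hc : ∀ i, MulAut.conj c (u i) = u (π i)) {i j : ι} {m : ℕ} (h : (u i * u j) ^ m = 1) :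
    (u (π i) * u (π j)) ^ m = 1 := by
  rw [← hc, ← hc, ← map_mul, ← map_pow, h, map_one]

namespace CoxeterMatrix

variable {B : Type*} (M : CoxeterMatrix B)

def diagramAut : Subgroup (Perm B) where
  carrier := {π | ∀ i j, M (π i) (π j) = M i j}
  one_mem' _ _ := rfl
  mul_mem' hπ hρ i j := (hπ _ _).trans (hρ i j)
  inv_mem' {π} hπ i j := by simpa using (hπ (π⁻¹ i) (π⁻¹ j)).symm

def diagramAutLift (π : M.diagramAut) : M.Group →* M.Group :=
  M.toCoxeterSystem.lift ⟨fun i ↦ M.toCoxeterSystem.simple ((π : Perm B) i), fun i j ↦ by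
    simpa only [π.2 i j] using
      M.toCoxeterSystem.simple_mul_simple_pow ((π : Perm B) i) ((π : Perm B) j)⟩

theorem diagramAutLift_simple (π : M.diagramAut) (i : B) :
    M.diagramAutLift π (M.toCoxeterSystem.simple i) = M.toCoxeterSystem.simple ((π : Perm B) i) :=
  M.toCoxeterSystem.lift_apply_simple _ i

theorem diagramAutLift_mul (π ρ : M.diagramAut) :
    M.diagramAutLift (π * ρ) = (M.diagramAutLift π).comp (M.diagramAutLift ρ) :=
  M.toCoxeterSystem.ext_simple fun i ↦ by
    rw [MonoidHom.comp_apply, diagramAutLift_simple, diagramAutLift_simple, diagramAutLift_simple]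
    rfl

theorem diagramAutLift_one : M.diagramAutLift 1 = MonoidHom.id M.Group :=
  M.toCoxeterSystem.ext_simple fun i ↦ diagramAutLift_simple M 1 i

def diagramAction : M.diagramAut →* MulAut M.Group where
  toFun π := MonoidHom.toMulEquiv (M.diagramAutLift π) (M.diagramAutLift π⁻¹)
    (by rw [← diagramAutLift_mul, inv_mul_cancel, diagramAutLift_one])
    (by rw [← diagramAutLift_mul, mul_inv_cancel, diagramAutLift_one])
  map_one' := MulEquiv.ext fun x ↦ by simp [diagramAutLift_one]
  map_mul' π ρ := MulEquiv.ext fun x ↦ by simp [diagramAutLift_mul]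

theorem diagramAction_simple (π : M.diagramAut) (i : B) :
    M.diagramAction π (M.toCoxeterSystem.simple i) = M.toCoxeterSystem.simple ((π : Perm B) i) :=
  M.diagramAutLift_simple π i

end CoxeterMatrix

namespace SemidirectProduct

variable {N G : Type*} [Group N] [Group G] {φ : G →* MulAut N}

theorem commute_inl_inr {n : N} {g : G} (h : φ g n = n) :
    Commute (inl n : N ⋊[φ] G) (inr g) := by
  ext <;> simp [h]

theorem inr_mul_inl_mul_inr {g : G} (hg : g * g = 1) (n : N) :
    (inr g : N ⋊[φ] G) * inl n * inr g = inl (φ g n) := by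
  rw [inl_aut, inv_eq_of_mul_eq_one_right hg]

theorem lift_compat_of_mclosure_eq_top {H : Type*} [Group H] {fn : N →* H} {fg : G →* H}
    {S : Set G} (hS : Submonoid.closure S = ⊤)
    (h : ∀ g ∈ S, fn.comp (φ g).toMonoidHom = (MulAut.conj (fg g)).toMonoidHom.comp fn) (g : G) :
    fn.comp (φ g).toMonoidHom = (MulAut.conj (fg g)).toMonoidHom.comp fn := by
  have hg : g ∈ Submonoid.closure S := hS ▸ Submonoid.mem_top g
  induction hg using Submonoid.closure_induction with
  | mem g hg => exact h g hg
  | one => ext; simp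
  | mul a b _ _ ha hb =>
    ext n
    have ha' := DFunLike.congr_fun ha (φ b n)
    have hb' := DFunLike.congr_fun hb n
    simp only [MonoidHom.comp_apply, MulEquiv.coe_toMonoidHom, MulAut.conj_apply] at ha' hb' ⊢
    rw [map_mul, MulAut.mul_apply, ha', hb', map_mul]
    group

end SemidirectProduct

section A2

local prefix:100 "r" => CoxeterSystem.simple (CoxeterMatrix.toCoxeterSystem (CoxeterMatrix.A 2))

theorem a2_braid : r 0 * (r 1 * r 0) = r 1 * (r 0 * r 1) := by
  simpa only [mul_assoc] using (CoxeterMatrix.A 2).toCoxeterSystem.simple_braid_of_eq_three rfl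

theorem a2_cases (w : (CoxeterMatrix.A 2).Group) :
    w = 1 ∨ w = r 0 ∨ w = r 1 ∨ w = r 0 * r 1 ∨ w = r 1 * r 0 ∨ w = r 0 * r 1 * r 0 := by
  induction w using (CoxeterMatrix.A 2).toCoxeterSystem.simple_induction_right with
  | one => left; rfl
  | mul_simple_right w i ih =>
    rcases ih with rfl | rfl | rfl | rfl | rfl | rfl <;> fin_cases i <;>
      simp only [Fin.zero_eta, Fin.mk_one, one_mul, mul_assoc, simple_mul_simple_self,
        simple_mul_simple_cancel_left, mul_one, a2_braid, true_or, or_true]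

def a2ToPerm : (CoxeterMatrix.A 2).Group →* Perm (Fin 3) :=
  (CoxeterMatrix.A 2).toCoxeterSystem.lift ⟨![swap 0 1, swap 1 2], by
    intro i j; fin_cases i <;> fin_cases j <;> decide⟩

theorem a2ToPerm_simple (i : Fin 2) : a2ToPerm (r i) = ![swap 0 1, swap 1 2] i :=
  (CoxeterMatrix.A 2).toCoxeterSystem.lift_apply_simple _ i

theorem perm_fin_three_cases (σ : Perm (Fin 3)) :
    σ = 1 ∨ σ = swap 0 1 ∨ σ = swap 1 2 ∨ σ = swap 0 1 * swap 1 2 ∨ σ = swap 1 2 * swap 0 1 ∨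
      σ = swap 0 1 * swap 1 2 * swap 0 1 := by
  revert σ; decide

theorem a2ToPerm_bijective : Function.Bijective a2ToPerm := by
  constructor
  · rw [injective_iff_map_eq_one]
    intro w hw
    rcases a2_cases w with rfl | rfl | rfl | rfl | rfl | rfl <;>
      simp only [map_one, map_mul, a2ToPerm_simple] at hw <;>
      first | rfl | exact absurd hw (by decide)
  · intro σ
    rcases perm_fin_three_cases σ with rfl | rfl | rfl | rfl | rfl | rfl
    exacts [⟨1, map_one _⟩, ⟨r 0, a2ToPerm_simple 0⟩, ⟨r 1, a2ToPerm_simple 1⟩,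
      ⟨r 0 * r 1, by simp only [map_mul, a2ToPerm_simple]; decide⟩,
      ⟨r 1 * r 0, by simp only [map_mul, a2ToPerm_simple]; decide⟩,
      ⟨r 0 * r 1 * r 0, by simp only [map_mul, a2ToPerm_simple]; decide⟩]

noncomputable def a2EquivPerm : (CoxeterMatrix.A 2).Group ≃* Perm (Fin 3) :=
  MulEquiv.ofBijective a2ToPerm a2ToPerm_bijective

theorem Equiv.Perm.mclosure_swap_zero_one_swap_one_two :
    Submonoid.closure {swap (0 : Fin 3) 1, swap 1 2} = ⊤ := by
  rw [← MonoidHom.mrange_eq_top.2 a2ToPerm_bijective.2, MonoidHom.mrange_eq_map,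
    ← (CoxeterMatrix.A 2).toCoxeterSystem.submonoid_closure_range_simple,
    MonoidHom.map_mclosure, ← Set.range_comp, ← Matrix.range_cons_cons_empty _ _ ![]]
  exact congrArg (fun f ↦ Submonoid.closure (Set.range f)) (funext a2ToPerm_simple)

end A2

theorem coxMatD4_apply (i j : Fin 4) :
    coxMatD4 i j = if i = j then 1 else if i = 1 ∨ j = 1 then 3 else 2 := by
  fin_cases i <;> fin_cases j <;> rfl

/-- `Sym₃` permuting the leaves `0, 2, 3` of the `D₄` diagram and fixing its centre `1`. -/
def leafPerm : Perm (Fin 3) →* Perm (Fin 4) := Perm.extendDomainHom (finSuccAboveEquiv 1)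

theorem leafPerm_apply_one (σ : Perm (Fin 3)) : leafPerm σ 1 = 1 :=
  σ.extendDomain_apply_not_subtype _ (by simp)

theorem leafPerm_mem_diagramAut (σ : Perm (Fin 3)) : leafPerm σ ∈ coxMatD4.diagramAut := by
  intro i j
  have h1 (k : Fin 4) : leafPerm σ k = 1 ↔ k = 1 :=
    (leafPerm σ).injective.eq_iff' (leafPerm_apply_one σ)
  simp only [coxMatD4_apply, (leafPerm σ).injective.eq_iff, h1]

theorem leafPerm_swap_zero_one : leafPerm (swap 0 1) = swap 0 2 := by decide

theorem leafPerm_swap_one_two : leafPerm (swap 1 2) = swap 2 3 := by decide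

def d4Action : Perm (Fin 3) →* MulAut coxMatD4.Group :=
  coxMatD4.diagramAction.comp (leafPerm.codRestrict _ leafPerm_mem_diagramAut)

theorem d4Action_simple (σ : Perm (Fin 3)) (i : Fin 4) :
    d4Action σ (coxMatD4.toCoxeterSystem.simple i) =
      coxMatD4.toCoxeterSystem.simple (leafPerm σ i) :=
  coxMatD4.diagramAction_simple _ i

section F4

local prefix:100 "s" => CoxeterSystem.simple (CoxeterMatrix.toCoxeterSystem CoxeterMatrix.F₄)
local prefix:100 "t" => CoxeterSystem.simple (CoxeterMatrix.toCoxeterSystem coxMatD4)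

theorem f4_braid_two_three : s 2 * s 3 * s 2 = s 3 * s 2 * s 3 :=
  CoxeterMatrix.F₄.toCoxeterSystem.simple_braid_of_eq_three rfl

theorem f4_commute_zero_two : Commute (s 0) (s 2) :=
  CoxeterMatrix.F₄.toCoxeterSystem.commute_simple_of_eq_two rfl

theorem f4_commute_zero_three : Commute (s 0) (s 3) :=
  CoxeterMatrix.F₄.toCoxeterSystem.commute_simple_of_eq_two rfl

theorem f4_commute_one_three : Commute (s 1) (s 3) :=
  CoxeterMatrix.F₄.toCoxeterSystem.commute_simple_of_eq_two rfl

def d4ToF4Gen : Fin 4 → CoxeterMatrix.F₄.Group :=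
  ![s 1, s 0, s 2 * s 1 * s 2, s 3 * (s 2 * s 1 * s 2) * s 3]

theorem conj_simple_two_d4ToF4Gen (k : Fin 4) :
    MulAut.conj (s 2) (d4ToF4Gen k) = d4ToF4Gen (swap 0 2 k) := by
  simp only [MulAut.conj_apply]
  fin_cases k
  · show s 2 * s 1 * (s 2)⁻¹ = s 2 * s 1 * s 2
    rw [inv_simple]
  · exact f4_commute_zero_two.symm.mul_inv_cancel
  · show s 2 * (s 2 * s 1 * s 2) * (s 2)⁻¹ = s 1
    simp only [inv_simple, mul_assoc, simple_mul_simple_cancel_left, simple_mul_simple_self,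
      mul_one]
  · show s 2 * (s 3 * (s 2 * s 1 * s 2) * s 3) * (s 2)⁻¹ = s 3 * (s 2 * s 1 * s 2) * s 3
    calc s 2 * (s 3 * (s 2 * s 1 * s 2) * s 3) * (s 2)⁻¹
        = (s 2 * s 3 * s 2) * s 1 * (s 2 * s 3 * s 2) := by simp only [inv_simple, mul_assoc]
      _ = (s 3 * s 2 * s 3) * s 1 * (s 3 * s 2 * s 3) := by rw [f4_braid_two_three]
      _ = s 3 * s 2 * (s 3 * s 1 * (s 3)⁻¹) * s 2 * s 3 := by simp only [inv_simple, mul_assoc]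
      _ = s 3 * (s 2 * s 1 * s 2) * s 3 := by
        rw [f4_commute_one_three.symm.mul_inv_cancel]; simp only [mul_assoc]

theorem conj_simple_three_d4ToF4Gen (k : Fin 4) :
    MulAut.conj (s 3) (d4ToF4Gen k) = d4ToF4Gen (swap 2 3 k) := by
  simp only [MulAut.conj_apply]
  fin_cases k
  · exact f4_commute_one_three.symm.mul_inv_cancel
  · exact f4_commute_zero_three.symm.mul_inv_cancel
  · show s 3 * (s 2 * s 1 * s 2) * (s 3)⁻¹ = s 3 * (s 2 * s 1 * s 2) * s 3
    rw [inv_simple]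
  · show s 3 * (s 3 * (s 2 * s 1 * s 2) * s 3) * (s 3)⁻¹ = s 2 * s 1 * s 2
    simp only [inv_simple, mul_assoc, simple_mul_simple_cancel_left, simple_mul_simple_self,
      mul_one]

theorem d4ToF4Gen_isLiftable : coxMatD4.IsLiftable d4ToF4Gen := by
  have h01 : (d4ToF4Gen 0 * d4ToF4Gen 1) ^ 3 = 1 :=
    CoxeterMatrix.F₄.toCoxeterSystem.simple_mul_simple_pow 1 0
  have h10 : (d4ToF4Gen 1 * d4ToF4Gen 0) ^ 3 = 1 :=
    CoxeterMatrix.F₄.toCoxeterSystem.simple_mul_simple_pow 0 1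
  have h02 : (d4ToF4Gen 0 * d4ToF4Gen 2) ^ 2 = 1 := by
    have h := CoxeterMatrix.F₄.toCoxeterSystem.simple_mul_simple_pow 1 2
    change (s 1 * s 2) ^ 4 = 1 at h
    change (s 1 * (s 2 * s 1 * s 2)) ^ 2 = 1
    rw [← h]
    simp only [pow_succ, pow_zero, one_mul, mul_assoc]
  refine CoxeterMatrix.isLiftable_of_lt (fun i ↦ ?_) fun i j hij ↦ ?_
  · fin_cases i <;> simp [d4ToF4Gen, mul_assoc, -CoxeterMatrix.toCoxeterSystem_simple]
  · fin_cases i <;> fin_cases j <;> first | exact absurd hij (by decide) | skip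
    -- the other four relations are conjugates of `h10` and `h02` by `s 2` and `s 3`
    exacts [h01, h02, mul_pow_eq_one_of_conj conj_simple_three_d4ToF4Gen h02,
      mul_pow_eq_one_of_conj conj_simple_two_d4ToF4Gen h10,
      mul_pow_eq_one_of_conj conj_simple_three_d4ToF4Gen
        (mul_pow_eq_one_of_conj conj_simple_two_d4ToF4Gen h10),
      mul_pow_eq_one_of_conj conj_simple_two_d4ToF4Gen
        (mul_pow_eq_one_of_conj conj_simple_three_d4ToF4Gen h02)]

def d4ToF4 : coxMatD4.Group →* CoxeterMatrix.F₄.Group :=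
  coxMatD4.toCoxeterSystem.lift ⟨d4ToF4Gen, d4ToF4Gen_isLiftable⟩

theorem d4ToF4_simple (k : Fin 4) : d4ToF4 (t k) = d4ToF4Gen k :=
  coxMatD4.toCoxeterSystem.lift_apply_simple _ k

def a2ToF4 : (CoxeterMatrix.A 2).Group →* CoxeterMatrix.F₄.Group :=
  (CoxeterMatrix.A 2).toCoxeterSystem.lift ⟨![s 2, s 3], CoxeterMatrix.isLiftable_of_lt
    (fun i ↦ by fin_cases i <;> exact simple_mul_simple_self _ _) fun i j hij ↦ by
      fin_cases i <;> fin_cases j <;> first | exact absurd hij (by decide) | skip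
      exact simple_mul_simple_pow _ 2 3⟩

noncomputable def permToF4 : Perm (Fin 3) →* CoxeterMatrix.F₄.Group :=
  a2ToF4.comp a2EquivPerm.symm.toMonoidHom

theorem permToF4_swap (i : Fin 2) : permToF4 (![swap 0 1, swap 1 2] i) = ![s 2, s 3] i := by
  rw [← a2ToPerm_simple]
  exact (congrArg a2ToF4 (a2EquivPerm.symm_apply_apply _)).trans
    ((CoxeterMatrix.A 2).toCoxeterSystem.lift_apply_simple _ i)

theorem d4ToF4_comp_d4Action (σ : Perm (Fin 3)) :
    d4ToF4.comp (d4Action σ).toMonoidHom =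
      (MulAut.conj (permToF4 σ)).toMonoidHom.comp d4ToF4 := by
  refine lift_compat_of_mclosure_eq_top Perm.mclosure_swap_zero_one_swap_one_two ?_ σ
  rintro _ (rfl | rfl) <;> refine coxMatD4.toCoxeterSystem.ext_simple fun k ↦ ?_ <;>
    simp only [MonoidHom.comp_apply, MulEquiv.coe_toMonoidHom, d4Action_simple, d4ToF4_simple]
  · rw [leafPerm_swap_zero_one, ← conj_simple_two_d4ToF4Gen]
    exact congrArg (fun g ↦ MulAut.conj g (d4ToF4Gen k)) (permToF4_swap 0).symm
  · rw [leafPerm_swap_one_two, ← conj_simple_three_d4ToF4Gen]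
    exact congrArg (fun g ↦ MulAut.conj g (d4ToF4Gen k)) (permToF4_swap 1).symm

noncomputable def semidirectToF4 :
    coxMatD4.Group ⋊[d4Action] Perm (Fin 3) →* CoxeterMatrix.F₄.Group :=
  SemidirectProduct.lift d4ToF4 permToF4 d4ToF4_comp_d4Action

def f4ToSemidirectGen : Fin 4 → coxMatD4.Group ⋊[d4Action] Perm (Fin 3) :=
  ![inl (t 1), inl (t 0), inr (swap 0 1), inr (swap 1 2)]

theorem f4ToSemidirectGen_isLiftable : CoxeterMatrix.F₄.IsLiftable f4ToSemidirectGen := by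
  have hfixed {k : Fin 4} {a b : Fin 3} (h : leafPerm (swap a b) k = k) :
      ((inl (t k) : coxMatD4.Group ⋊[d4Action] Perm (Fin 3)) * inr (swap a b)) ^ 2 = 1 := by
    rw [(commute_inl_inr (by rw [d4Action_simple, h])).mul_pow, ← map_pow, ← map_pow, simple_sq,
      pow_two, swap_mul_self, map_one, map_one, one_mul]
  have hsq : ((inl (t 0) : coxMatD4.Group ⋊[d4Action] Perm (Fin 3)) * inr (swap 0 1)) ^ 2 =
      inl (t 0 * t 2) := by
    rw [pow_two, mul_assoc, ← mul_assoc (inr _), inr_mul_inl_mul_inr (swap_mul_self 0 1),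
      d4Action_simple, leafPerm_swap_zero_one, ← map_mul]
    rfl
  refine CoxeterMatrix.isLiftable_of_lt (fun i ↦ ?_) fun i j hij ↦ ?_
  · fin_cases i <;> simp [f4ToSemidirectGen, ← map_mul, -CoxeterMatrix.toCoxeterSystem_simple]
  · fin_cases i <;> fin_cases j <;> first | exact absurd hij (by decide) | skip
    · show (inl (t 1) * inl (t 0) : coxMatD4.Group ⋊[d4Action] Perm (Fin 3)) ^ 3 = 1
      rw [← map_mul, ← map_pow]
      exact (congrArg inl (simple_mul_simple_pow _ 1 0)).trans (map_one _)
    · exact hfixed (by rw [leafPerm_swap_zero_one]; rfl)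
    · exact hfixed (by rw [leafPerm_swap_one_two]; rfl)
    · show ((inl (t 0) : coxMatD4.Group ⋊[d4Action] Perm (Fin 3)) * inr (swap 0 1)) ^ 4 = 1
      calc _ = (((inl (t 0) : coxMatD4.Group ⋊[d4Action] Perm (Fin 3)) * inr (swap 0 1)) ^ 2) ^ 2 :=
            pow_mul _ 2 2
        _ = 1 := by
          rw [hsq, ← map_pow]
          exact (congrArg inl (simple_mul_simple_pow _ 0 2)).trans (map_one _)
    · exact hfixed (by rw [leafPerm_swap_one_two]; rfl)
    · show (inr (swap 0 1) * inr (swap 1 2) : coxMatD4.Group ⋊[d4Action] Perm (Fin 3)) ^ 3 = 1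
      rw [← map_mul, ← map_pow, show (swap (0 : Fin 3) 1 * swap 1 2) ^ 3 = 1 by decide, map_one]

def f4ToSemidirect : CoxeterMatrix.F₄.Group →* coxMatD4.Group ⋊[d4Action] Perm (Fin 3) :=
  CoxeterMatrix.F₄.toCoxeterSystem.lift ⟨f4ToSemidirectGen, f4ToSemidirectGen_isLiftable⟩

theorem f4ToSemidirect_simple (i : Fin 4) : f4ToSemidirect (s i) = f4ToSemidirectGen i :=
  CoxeterMatrix.F₄.toCoxeterSystem.lift_apply_simple _ i

theorem semidirectToF4_comp_f4ToSemidirect :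
    semidirectToF4.comp f4ToSemidirect = MonoidHom.id _ := by
  refine CoxeterMatrix.F₄.toCoxeterSystem.ext_simple fun i ↦ ?_
  rw [MonoidHom.comp_apply, f4ToSemidirect_simple, MonoidHom.id_apply]
  fin_cases i
  · exact (lift_inl _ _ _ _).trans (d4ToF4_simple 1)
  · exact (lift_inl _ _ _ _).trans (d4ToF4_simple 0)
  · exact (lift_inr _ _ _ _).trans (permToF4_swap 0)
  · exact (lift_inr _ _ _ _).trans (permToF4_swap 1)

theorem f4ToSemidirect_comp_semidirectToF4 :
    f4ToSemidirect.comp semidirectToF4 = MonoidHom.id _ := by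
  have h2 : f4ToSemidirect (s 2 * s 1 * s 2) = inl (t 2) := by
    rw [map_mul, map_mul, f4ToSemidirect_simple, f4ToSemidirect_simple]
    refine (inr_mul_inl_mul_inr (swap_mul_self 0 1) _).trans ?_
    rw [d4Action_simple, leafPerm_swap_zero_one]
    rfl
  refine SemidirectProduct.hom_ext ?_ ?_
  · rw [MonoidHom.comp_assoc, semidirectToF4, lift_comp_inl, MonoidHom.id_comp]
    refine coxMatD4.toCoxeterSystem.ext_simple fun k ↦ ?_
    rw [MonoidHom.comp_apply, d4ToF4_simple]
    fin_cases k
    · exact f4ToSemidirect_simple 1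
    · exact f4ToSemidirect_simple 0
    · exact h2
    · show f4ToSemidirect (s 3 * (s 2 * s 1 * s 2) * s 3) = inl (t 3)
      rw [map_mul, map_mul, h2, f4ToSemidirect_simple]
      refine (inr_mul_inl_mul_inr (swap_mul_self 1 2) _).trans ?_
      rw [d4Action_simple, leafPerm_swap_one_two]
      rfl
  · rw [MonoidHom.comp_assoc, semidirectToF4, lift_comp_inr, MonoidHom.id_comp]
    refine MonoidHom.eq_of_eqOn_denseM Perm.mclosure_swap_zero_one_swap_one_two ?_
    rintro _ (rfl | rfl)
    · exact (congrArg _ (permToF4_swap 0)).trans (f4ToSemidirect_simple 2)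
    · exact (congrArg _ (permToF4_swap 1)).trans (f4ToSemidirect_simple 3)

noncomputable def f4EquivSemidirect :
    CoxeterMatrix.F₄.Group ≃* coxMatD4.Group ⋊[d4Action] Perm (Fin 3) :=
  MonoidHom.toMulEquiv f4ToSemidirect semidirectToF4 semidirectToF4_comp_f4ToSemidirect
    f4ToSemidirect_comp_semidirectToF4

end F4

/-- The Coxeter group `W(F₄)` is isomorphic to a semidirect product of the
Coxeter group `W(D₄)` by the symmetric group `Sym₃`. -/
theorem stmt_9 :
    ∃ φ : Equiv.Perm (Fin 3) →* MulAut coxMatD4.Group,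
      Nonempty (CoxeterMatrix.F₄.Group ≃* coxMatD4.Group ⋊[φ] Equiv.Perm (Fin 3)) :=
  ⟨d4Action, ⟨f4EquivSemidirect⟩⟩
end

section
/- Let Γ be a finite nonempty bichromatic graph that is locally like W(F₄). Then the number of short vertices of Γ equals the number of long vertices of Γ; consequently the total number of vertices of Γ is divisible by 8, and moreover Γ has at least 24 vertices. -/
/-- The underlying simple graph of the bichromatic graph `W(B₃)` (equivalently of `W(C₃)`):
vertices the ordered pairs `(i,j) ∈ {1,2,3} × {1,2,3}`, distinct vertices `(i,j)` and `(k,l)`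
being adjacent iff `{i,j} ∩ {k,l} = ∅` or `(k,l) = (j,i)`. -/
def graphB3 : SimpleGraph (Fin 3 × Fin 3) :=
  SimpleGraph.fromRel fun a b =>
    ({a.1, a.2} : Finset (Fin 3)) ∩ {b.1, b.2} = ∅ ∨ b = (a.2, a.1)

/-- The labeling of `W(B₃)`: the vertex `(i,j)` is short (label `true`) iff `i = j`.
In `W(C₃)` the labels are interchanged. -/
def labelB3 (a : Fin 3 × Fin 3) : Bool := a.1 = a.2

/-- A bichromatic graph `(Γ, lab)` (where `lab v = true` means `v` is short and
`lab v = false` means `v` is long) is *locally like `W(F₄)`* if the neighborhood of every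
short vertex, with its induced labeling, is isomorphic as a bichromatic graph to `W(B₃)`,
and the neighborhood of every long vertex is isomorphic as a bichromatic graph to `W(C₃)`. -/
def IsLocallyLikeWF4 {V : Type*} (Γ : SimpleGraph V) (lab : V → Bool) : Prop :=
  (∀ x : V, lab x = true →
      ∃ e : Γ.induce (Γ.neighborSet x) ≃g graphB3,
        ∀ u : Γ.neighborSet x, lab u.1 = labelB3 (e u)) ∧
  (∀ x : V, lab x = false →
      ∃ e : Γ.induce (Γ.neighborSet x) ≃g graphB3,
        ∀ u : Γ.neighborSet x, lab u.1 = !labelB3 (e u))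

instance : DecidableRel graphB3.Adj := fun a b =>
  decidable_of_iff' _ (SimpleGraph.fromRel_adj _ a b)

lemma graphB3_triangle : ∀ p q : Fin 3 × Fin 3, labelB3 p = true → labelB3 q = true →
    p ≠ q → graphB3.Adj p q := by decide

lemma graphB3_matching : ∀ p q r : Fin 3 × Fin 3, labelB3 p = false → labelB3 q = false →
    labelB3 r = false → p ≠ q → p ≠ r → q ≠ r →
    ¬ (graphB3.Adj p q ∧ graphB3.Adj p r ∧ graphB3.Adj q r) := by decide

lemma card_labelB3_true : Fintype.card {p : Fin 3 × Fin 3 // labelB3 p = true} = 3 := by decide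
lemma card_labelB3_false : Fintype.card {p : Fin 3 × Fin 3 // labelB3 p = false} = 6 := by decide
lemma card_nlabelB3_true : Fintype.card {p : Fin 3 × Fin 3 // (!labelB3 p) = true} = 6 := by
  decide
lemma card_nlabelB3_false : Fintype.card {p : Fin 3 × Fin 3 // (!labelB3 p) = false} = 3 := by
  decide

section Aux

variable {V : Type*} [Fintype V] (Γ : SimpleGraph V) (lab : V → Bool)

lemma card_nbr [DecidableRel Γ.Adj] (x : V) (e : Γ.induce (Γ.neighborSet x) ≃g graphB3)
    (f : Fin 3 × Fin 3 → Bool) (hf : ∀ u : Γ.neighborSet x, lab u.1 = f (e u)) (b : Bool) :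
    Fintype.card {u : V // Γ.Adj x u ∧ lab u = b}
      = Fintype.card {p : Fin 3 × Fin 3 // f p = b} := by
  classical
  refine Fintype.card_congr ?_
  have E1 : {u : V // Γ.Adj x u ∧ lab u = b} ≃ {u : Γ.neighborSet x // lab u.1 = b} :=
    (Equiv.subtypeSubtypeEquivSubtypeInter (· ∈ Γ.neighborSet x) (fun u => lab u = b)).symm
  have E2 : {u : Γ.neighborSet x // lab u.1 = b} ≃ {p : Fin 3 × Fin 3 // f p = b} :=
    e.toEquiv.subtypeEquiv (fun u => by rw [hf u]; rfl)
  exact E1.trans E2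

variable (h : IsLocallyLikeWF4 Γ lab)
include h

open Finset in
lemma count_nbr [DecidableEq V] [DecidableRel Γ.Adj] [DecidableEq Bool] (x : V) (b : Bool) :
    (Finset.univ.filter fun u => Γ.Adj x u ∧ lab u = b).card
      = if lab x = b then 3 else 6 := by
  classical
  rw [← Fintype.card_subtype]
  cases hx : lab x with
  | true =>
    obtain ⟨e, he⟩ := h.1 x hx
    have h2 := card_nbr Γ lab x e labelB3 he b
    cases b
    · have h3 := h2.trans card_labelB3_false
      simp only [Bool.true_eq_false, if_false]
      convert h3 using 2
    · have h3 := h2.trans card_labelB3_true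
      simp only [if_true]
      convert h3 using 2
  | false =>
    obtain ⟨e, he⟩ := h.2 x hx
    have h2 := card_nbr Γ lab x e (fun p => !labelB3 p) he b
    cases b
    · have h3 := h2.trans card_nlabelB3_false
      simp only [if_true]
      convert h3 using 2
    · have h3 := h2.trans card_nlabelB3_true
      simp only [Bool.false_eq_true, if_false]
      convert h3 using 2

lemma clique_same {x u v : V} (hx : lab x = true) (hu : Γ.Adj x u) (hv : Γ.Adj x v)
    (lu : lab u = true) (lv : lab v = true) (huv : u ≠ v) : Γ.Adj u v := by
  obtain ⟨e, he⟩ := h.1 x hx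
  set u' : Γ.neighborSet x := ⟨u, hu⟩
  set v' : Γ.neighborSet x := ⟨v, hv⟩
  have hne : e u' ≠ e v' := by
    intro hh
    exact huv (congrArg Subtype.val (e.toEquiv.injective hh))
  have hadj : graphB3.Adj (e u') (e v') :=
    graphB3_triangle _ _ (by rw [← he u']; exact lu) (by rw [← he v']; exact lv) hne
  exact e.map_adj_iff.mp hadj

lemma no_tri_opp {y u v w : V} (hy : lab y = false)
    (hu : Γ.Adj y u) (hv : Γ.Adj y v) (hw : Γ.Adj y w)
    (lu : lab u = true) (lv : lab v = true) (lw : lab w = true)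
    (huv : u ≠ v) (huw : u ≠ w) (hvw : v ≠ w)
    (auv : Γ.Adj u v) (auw : Γ.Adj u w) (avw : Γ.Adj v w) : False := by
  obtain ⟨e, he⟩ := h.2 y hy
  set u' : Γ.neighborSet y := ⟨u, hu⟩
  set v' : Γ.neighborSet y := ⟨v, hv⟩
  set w' : Γ.neighborSet y := ⟨w, hw⟩
  have lab_of : ∀ (z : V) (hz : Γ.Adj y z), lab z = true →
      labelB3 (e ⟨z, hz⟩) = false := by
    intro z hz hzl
    have := he ⟨z, hz⟩
    rw [hzl] at this
    exact Bool.not_eq_true' .. |>.mp this.symm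
  have d1 : e u' ≠ e v' := fun hh => huv (congrArg Subtype.val (e.toEquiv.injective hh))
  have d2 : e u' ≠ e w' := fun hh => huw (congrArg Subtype.val (e.toEquiv.injective hh))
  have d3 : e v' ≠ e w' := fun hh => hvw (congrArg Subtype.val (e.toEquiv.injective hh))
  exact graphB3_matching (e u') (e v') (e w') (lab_of u hu lu) (lab_of v hv lv)
    (lab_of w hw lw) d1 d2 d3
    ⟨e.map_adj_iff.mpr auv, e.map_adj_iff.mpr auw, e.map_adj_iff.mpr avw⟩

end Aux

open Finset in
/-- A finite nonempty bichromatic graph that is locally like `W(F₄)` has as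
many short vertices as long vertices; consequently its number of vertices is divisible by 8,
and it has at least 24 vertices. -/
theorem stmt_14 {V : Type*} [Fintype V] [Nonempty V]
    (Γ : SimpleGraph V) (lab : V → Bool) (h : IsLocallyLikeWF4 Γ lab) :
    Fintype.card {v : V // lab v = true} = Fintype.card {v : V // lab v = false} ∧
      8 ∣ Fintype.card V ∧ 24 ≤ Fintype.card V := by
  classical
  set Ss := Finset.univ.filter (fun v => lab v = true) with hSs
  set Ls := Finset.univ.filter (fun v => lab v = false) with hLs
  have key := count_nbr Γ lab h
  -- opposite-label neighbour counts, as filters of Ss/Ls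
  have habove : ∀ x : V, Ls.bipartiteAbove (fun a b => Γ.Adj a b) x
      = Finset.univ.filter fun u => Γ.Adj x u ∧ lab u = false := by
    intro x; ext u
    simp [Finset.bipartiteAbove, hLs, and_comm]
  have hbelowS : ∀ y : V, Ss.bipartiteBelow (fun a b => Γ.Adj a b) y
      = Finset.univ.filter fun u => Γ.Adj y u ∧ lab u = true := by
    intro y; ext u
    simp [Finset.bipartiteBelow, hSs, and_comm, Γ.adj_comm]
  -- Step 1 : S = L
  have hSL : Ss.card = Ls.card := by
    have hbi := Finset.sum_card_bipartiteAbove_eq_sum_card_bipartiteBelow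
      (r := fun a b : V => Γ.Adj a b) (s := Ss) (t := Ls)
    have hL : ∀ x ∈ Ss, (Ls.bipartiteAbove (fun a b => Γ.Adj a b) x).card = 6 := by
      intro x hx
      have hxl : lab x = true := (Finset.mem_filter.mp hx).2
      rw [habove x, key x false, if_neg (by simp [hxl])]
    have hR : ∀ y ∈ Ls, (Ss.bipartiteBelow (fun a b => Γ.Adj a b) y).card = 6 := by
      intro y hy
      have hyl : lab y = false := (Finset.mem_filter.mp hy).2
      rw [hbelowS y, key y true, if_neg (by simp [hyl])]
    rw [Finset.sum_congr rfl hL, Finset.sum_congr rfl hR, Finset.sum_const,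
      Finset.sum_const, smul_eq_mul, smul_eq_mul] at hbi
    omega
  -- the closed short-neighbourhood
  set c : V → Finset V :=
    fun x => insert x (Finset.univ.filter fun u => Γ.Adj x u ∧ lab u = true) with hc
  have hc_card : ∀ x, lab x = true → (c x).card = 4 := by
    intro x hx
    rw [hc]
    rw [Finset.card_insert_of_notMem (by simp [Γ.irrefl])]
    rw [key x true, if_pos hx]
  have hc_mem : ∀ x z, z ∈ c x ↔ z = x ∨ (Γ.Adj x z ∧ lab z = true) := by
    intro x z; simp [hc]
  have hsub : ∀ x y, lab x = true → lab y = true → Γ.Adj x y → c x ⊆ c y := by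
    intro x y hx hy hxy z hz
    rcases (hc_mem x z).mp hz with rfl | ⟨hxz, hzl⟩
    · exact (hc_mem y z).mpr (Or.inr ⟨hxy.symm, hx⟩)
    · by_cases hzy : z = y
      · exact (hc_mem y z).mpr (Or.inl hzy)
      · exact (hc_mem y z).mpr
          (Or.inr ⟨(clique_same Γ lab h hx hxz hxy hzl hy hzy).symm, hzl⟩)
  have hcc : ∀ x y, lab x = true → y ∈ c x → lab y = true ∧ c x = c y := by
    intro x y hx hy
    rcases (hc_mem x y).mp hy with rfl | ⟨hxy, hyl⟩
    · exact ⟨hx, rfl⟩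
    · exact ⟨hyl, Finset.Subset.antisymm (hsub x y hx hyl hxy) (hsub y x hyl hx hxy.symm)⟩
  -- Step 2 : 4 ∣ S
  have hdvd4 : 4 ∣ Ss.card := by
    have hfw := Finset.card_eq_sum_card_fiberwise
      (f := c) (s := Ss) (t := Ss.image c) (fun x hx => Finset.mem_image_of_mem c hx)
    have hfib : ∀ b ∈ Ss.image c, (Ss.filter fun a => c a = b).card = 4 := by
      intro b hb
      obtain ⟨x, hxS, rfl⟩ := Finset.mem_image.mp hb
      have hx : lab x = true := (Finset.mem_filter.mp hxS).2
      have heq : Ss.filter (fun a => c a = c x) = c x := by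
        ext z
        constructor
        · intro hz
          have hcz := (Finset.mem_filter.mp hz).2
          rw [← hcz]
          exact (hc_mem z z).mpr (Or.inl rfl)
        · intro hz
          obtain ⟨hzl, hcx⟩ := hcc x z hx hz
          exact Finset.mem_filter.mpr ⟨Finset.mem_filter.mpr ⟨Finset.mem_univ z, hzl⟩, hcx.symm⟩
      rw [heq, hc_card x hx]
    rw [hfw, Finset.sum_congr rfl hfib, Finset.sum_const, smul_eq_mul]
    exact dvd_mul_left 4 _
  -- a short vertex exists
  have hex : ∃ x, lab x = true := by
    obtain ⟨v⟩ := ‹Nonempty V›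
    cases hv : lab v with
    | true => exact ⟨v, hv⟩
    | false =>
      have h6 : (Finset.univ.filter fun u => Γ.Adj v u ∧ lab u = true).card = 6 := by
        rw [key v true, if_neg (by simp [hv])]
      have hpos : (Finset.univ.filter fun u => Γ.Adj v u ∧ lab u = true).Nonempty :=
        Finset.card_pos.mp (by omega)
      obtain ⟨u, hu⟩ := hpos
      exact ⟨u, (Finset.mem_filter.mp hu).2.2⟩
  -- Step 3 : 12 ≤ L
  obtain ⟨x₀, hx₀⟩ := hex
  have h12 : 12 ≤ Ls.card := by
    set Q := c x₀ with hQ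
    have hQ4 : Q.card = 4 := hc_card x₀ hx₀
    have hQlab : ∀ q ∈ Q, lab q = true := fun q hq => (hcc x₀ q hx₀ hq).1
    have hQclique : ∀ q₁ ∈ Q, ∀ q₂ ∈ Q, q₁ ≠ q₂ → Γ.Adj q₁ q₂ := by
      intro q₁ h1 q₂ h2 hne
      rcases (hc_mem x₀ q₁).mp h1 with rfl | ⟨ha1, hl1⟩
      · rcases (hc_mem q₁ q₂).mp h2 with rfl | ⟨ha2, _⟩
        · exact absurd rfl hne
        · exact ha2
      · rcases (hc_mem x₀ q₂).mp h2 with rfl | ⟨ha2, hl2⟩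
        · exact ha1.symm
        · exact clique_same Γ lab h hx₀ ha1 ha2 hl1 hl2 hne
    have hbi := Finset.sum_card_bipartiteAbove_eq_sum_card_bipartiteBelow
      (r := fun a b : V => Γ.Adj a b) (s := Q) (t := Ls)
    have hLHS : ∀ q ∈ Q, (Ls.bipartiteAbove (fun a b => Γ.Adj a b) q).card = 6 := by
      intro q hq
      rw [habove q, key q false, if_neg (by simp [hQlab q hq])]
    have hRHS : ∀ y ∈ Ls, (Q.bipartiteBelow (fun a b => Γ.Adj a b) y).card ≤ 2 := by
      intro y hy
      by_contra hgt
      push_neg at hgt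
      obtain ⟨t, hts, ht3⟩ := Finset.exists_subset_card_eq
        (s := Q.bipartiteBelow (fun a b => Γ.Adj a b) y) (n := 3) (by omega)
      obtain ⟨a, b, c', hab, hac, hbc, rfl⟩ := Finset.card_eq_three.mp ht3
      have hmem : ∀ z ∈ ({a, b, c'} : Finset V), z ∈ Q ∧ Γ.Adj z y := by
        intro z hz
        have := hts hz
        rw [Finset.mem_bipartiteBelow] at this
        exact this
      obtain ⟨haQ, hay⟩ := hmem a (Finset.mem_insert_self a _)
      obtain ⟨hbQ, hby⟩ := hmem b
        (Finset.mem_insert_of_mem (Finset.mem_insert_self b _))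
      obtain ⟨hcQ, hcy⟩ := hmem c'
        (Finset.mem_insert_of_mem (Finset.mem_insert_of_mem (Finset.mem_singleton_self c')))
      have hyl : lab y = false := (Finset.mem_filter.mp hy).2
      exact no_tri_opp Γ lab h hyl hay.symm hby.symm hcy.symm
        (hQlab a haQ) (hQlab b hbQ) (hQlab c' hcQ) hab hac hbc
        (hQclique a haQ b hbQ hab) (hQclique a haQ c' hcQ hac) (hQclique b hbQ c' hcQ hbc)
    have hsum1 : (∑ q ∈ Q, (Ls.bipartiteAbove (fun a b => Γ.Adj a b) q).card) = 24 := by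
      rw [Finset.sum_congr rfl hLHS, Finset.sum_const, smul_eq_mul, hQ4]
    have hsum2 : (∑ y ∈ Ls, (Q.bipartiteBelow (fun a b => Γ.Adj a b) y).card)
        ≤ 2 * Ls.card := by
      calc (∑ y ∈ Ls, (Q.bipartiteBelow (fun a b => Γ.Adj a b) y).card)
          ≤ ∑ _y ∈ Ls, 2 := Finset.sum_le_sum hRHS
        _ = 2 * Ls.card := by rw [Finset.sum_const, smul_eq_mul, mul_comm]
    omega
  -- assemble
  have hVcard : Fintype.card V = Ss.card + Ls.card := by
    rw [hSs, hLs, ← Finset.card_univ]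
    rw [← Finset.card_filter_add_card_filter_not (s := Finset.univ)
      (p := fun v => lab v = true)]
    congr 1
    have hpq : (Finset.univ.filter fun a => ¬ lab a = true)
        = Finset.univ.filter fun v => lab v = false := by
      ext v; simp
    rw [hpq]
  have hc1 : Fintype.card {v : V // lab v = true} = Ss.card := Fintype.card_subtype _
  have hc2 : Fintype.card {v : V // lab v = false} = Ls.card := Fintype.card_subtype _
  refine ⟨by rw [hc1, hc2, hSL], ?_, ?_⟩
  · rw [hVcard, ← hSL]
    obtain ⟨k, hk⟩ := hdvd4
    exact ⟨k, by omega⟩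
  · omega
end

section
/- Let Γ be a bichromatic graph that is locally like W(F₄). Then every connected component of the subgraph of Γ induced on the short vertices is a clique on exactly 4 vertices, and likewise every connected component of the subgraph induced on the long vertices is a clique on exactly 4 vertices. -/
lemma graphB3_adj_diag {i j : Fin 3} (hij : i ≠ j) : graphB3.Adj (i, i) (j, j) := by
  refine ⟨by simp [Prod.ext_iff, hij], Or.inl (Or.inl ?_)⟩
  ext a
  simp only [Finset.mem_inter, Finset.mem_insert, Finset.mem_singleton, Finset.notMem_empty,
    iff_false, not_and, or_self]
  rintro rfl rfl
  exact hij rfl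

lemma key_aux {V : Type*} {Γ : SimpleGraph V} {lab : V → Bool} (x : V)
    (e : Γ.induce (Γ.neighborSet x) ≃g graphB3)
    (hlab : ∀ u : Γ.neighborSet x, (lab u.1 = lab x ↔ (e u).1 = (e u).2)) :
    ∃ f : Fin 3 → V, Function.Injective f ∧
      (∀ i, Γ.Adj x (f i) ∧ lab (f i) = lab x) ∧
      (∀ i j, i ≠ j → Γ.Adj (f i) (f j)) ∧
      (∀ y, Γ.Adj x y → lab y = lab x → ∃ i, y = f i) := by
  refine ⟨fun i => (e.symm (i, i)).1, ?_, ?_, ?_, ?_⟩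
  · intro i j hij
    have h2 : e.symm (i, i) = e.symm (j, j) := Subtype.ext hij
    have := e.symm.injective h2
    simpa [Prod.ext_iff] using this
  · intro i
    refine ⟨(e.symm (i, i)).2, ?_⟩
    refine (hlab (e.symm (i, i))).mpr ?_
    rw [RelIso.apply_symm_apply]
  · intro i j hij
    have hadj := graphB3_adj_diag hij
    have := e.symm.map_rel_iff.mpr hadj
    simpa using this
  · intro y hy hl
    set u : Γ.neighborSet x := ⟨y, hy⟩ with hu
    have h2 : (e u).1 = (e u).2 := (hlab u).mp hl
    refine ⟨(e u).1, ?_⟩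
    have h3 : ((e u).1, (e u).1) = e u := Prod.ext rfl h2
    have h4 : e.symm ((e u).1, (e u).1) = u := by rw [h3, RelIso.symm_apply_apply]
    show y = (e.symm ((e u).1, (e u).1)).1
    exact (congrArg Subtype.val h4).symm

lemma key {V : Type*} {Γ : SimpleGraph V} {lab : V → Bool}
    (h : (∀ x : V, lab x = true →
      ∃ e : Γ.induce (Γ.neighborSet x) ≃g graphB3,
        ∀ u : Γ.neighborSet x, lab u.1 = labelB3 (e u)) ∧
      (∀ x : V, lab x = false →
      ∃ e : Γ.induce (Γ.neighborSet x) ≃g graphB3,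
        ∀ u : Γ.neighborSet x, lab u.1 = !labelB3 (e u))) (x : V) :
    ∃ f : Fin 3 → V, Function.Injective f ∧
      (∀ i, Γ.Adj x (f i) ∧ lab (f i) = lab x) ∧
      (∀ i j, i ≠ j → Γ.Adj (f i) (f j)) ∧
      (∀ y, Γ.Adj x y → lab y = lab x → ∃ i, y = f i) := by
  rcases hb : lab x with _ | _
  · obtain ⟨e, he⟩ := h.2 x hb
    have hk := key_aux (lab := lab) x e (fun u => by rw [he u, hb, labelB3]; simp)
    rwa [hb] at hk
  · obtain ⟨e, he⟩ := h.1 x hb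
    have hk := key_aux (lab := lab) x e (fun u => by rw [he u, hb, labelB3]; simp)
    rwa [hb] at hk

theorem stmt_15' {V : Type*} (Γ : SimpleGraph V) (lab : V → Bool)
    (h : (∀ x : V, lab x = true →
      ∃ e : Γ.induce (Γ.neighborSet x) ≃g graphB3,
        ∀ u : Γ.neighborSet x, lab u.1 = labelB3 (e u)) ∧
      (∀ x : V, lab x = false →
      ∃ e : Γ.induce (Γ.neighborSet x) ≃g graphB3,
        ∀ u : Γ.neighborSet x, lab u.1 = !labelB3 (e u))) :
    ∀ (b : Bool) (v : {v : V | lab v = b}),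
      Nat.card {w : {v : V | lab v = b} //
          (Γ.induce {v : V | lab v = b}).Reachable v w} = 4 ∧
        ∀ w₁ w₂ : {v : V | lab v = b},
          (Γ.induce {v : V | lab v = b}).Reachable v w₁ →
          (Γ.induce {v : V | lab v = b}).Reachable v w₂ →
          w₁ ≠ w₂ → (Γ.induce {v : V | lab v = b}).Adj w₁ w₂ := by
  classical
  intro b v
  have hv : lab v.1 = b := v.2
  obtain ⟨f, finj, hf1, hf2, hf3⟩ := key h v.1
  -- the candidate component
  set S : Finset V := {v.1, f 0, f 1, f 2} with hS
  have hvf : ∀ i, v.1 ≠ f i := fun i => (hf1 i).1.ne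
  have hmemS : ∀ a, a ∈ S ↔ a = v.1 ∨ ∃ i, a = f i := by
    intro a
    constructor
    · intro ha
      rcases Finset.mem_insert.mp ha with h1 | h1
      · exact Or.inl h1
      · simp only [Finset.mem_insert, Finset.mem_singleton] at h1
        rcases h1 with h1 | h1 | h1
        exacts [Or.inr ⟨0, h1⟩, Or.inr ⟨1, h1⟩, Or.inr ⟨2, h1⟩]
    · rintro (rfl | ⟨i, rfl⟩)
      · exact Finset.mem_insert_self _ _
      · fin_cases i <;> simp [hS]
  have hlabS : ∀ a ∈ S, lab a = b := by
    intro a ha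
    rcases (hmemS a).mp ha with rfl | ⟨i, rfl⟩
    · exact hv
    · rw [(hf1 i).2, hv]
  have hadjS : ∀ a b, a ∈ S → b ∈ S → a ≠ b → Γ.Adj a b := by
    intro a c ha hc hac
    rcases (hmemS a).mp ha with rfl | ⟨i, rfl⟩ <;>
      rcases (hmemS c).mp hc with rfl | ⟨j, rfl⟩
    · exact absurd rfl hac
    · exact (hf1 j).1
    · exact (hf1 i).1.symm
    · exact hf2 i j (fun hij => hac (by rw [hij]))
  -- closure under one step in the induced graph
  have hclose : ∀ u w : {v : V | lab v = b}, u.1 ∈ S →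
      (Γ.induce {v : V | lab v = b}).Adj u w → w.1 ∈ S := by
    intro u w hu huw
    have hadj : Γ.Adj u.1 w.1 := huw
    have hwlab : lab w.1 = b := w.2
    rcases (hmemS u.1).mp hu with h1 | ⟨i, h1⟩
    · -- u = v
      obtain ⟨i, hi⟩ := hf3 w.1 (h1 ▸ hadj) (by rw [hwlab, hv])
      exact (hmemS w.1).mpr (Or.inr ⟨i, hi⟩)
    · -- u = f i
      obtain ⟨g, ginj, hg1, hg2, hg3⟩ := key h (f i)
      have hlabfi : lab (f i) = b := (hf1 i).2.trans hv
      -- w is a same-label neighbor of f i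
      obtain ⟨m, hm⟩ := hg3 w.1 (h1 ▸ hadj) (by rw [hwlab, hlabfi])
      -- the three known same-label neighbors of f i
      set A : Finset V := insert v.1 ((Finset.univ.erase i).image f) with hA
      set B : Finset V := Finset.univ.image g with hB
      have hAB : A ⊆ B := by
        intro a ha
        rcases Finset.mem_insert.mp ha with rfl | ha
        · obtain ⟨m', hm'⟩ := hg3 v.1 (hf1 i).1.symm (hv.trans hlabfi.symm)
          exact Finset.mem_image.mpr ⟨m', Finset.mem_univ _, hm'.symm⟩
        · obtain ⟨j, hj, rfl⟩ := Finset.mem_image.mp ha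
          have hji : j ≠ i := Finset.ne_of_mem_erase hj
          obtain ⟨m', hm'⟩ := hg3 (f j) (hf2 i j (Ne.symm hji))
            ((hf1 j).2.trans ((hf1 i).2).symm)
          exact Finset.mem_image.mpr ⟨m', Finset.mem_univ _, hm'.symm⟩
      have hcardA : A.card = 3 := by
        rw [hA, Finset.card_insert_of_notMem, Finset.card_image_of_injective _ finj,
          Finset.card_erase_of_mem (Finset.mem_univ _)]
        · simp
        · intro hvmem
          obtain ⟨j, _, hj⟩ := Finset.mem_image.mp hvmem
          exact hvf j hj.symm
      have hcardB : B.card = 3 := by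
        rw [hB, Finset.card_image_of_injective _ ginj]
        simp
      have hABeq : A = B := Finset.eq_of_subset_of_card_le hAB (by omega)
      have hwA : w.1 ∈ A := by
        rw [hABeq, hB]
        exact Finset.mem_image.mpr ⟨m, Finset.mem_univ _, hm.symm⟩
      rcases Finset.mem_insert.mp hwA with h2 | h2
      · exact (hmemS w.1).mpr (Or.inl h2)
      · obtain ⟨j, _, hj⟩ := Finset.mem_image.mp h2
        exact (hmemS w.1).mpr (Or.inr ⟨j, hj.symm⟩)
  -- reachability characterization
  have hwalk : ∀ (u w : {v : V | lab v = b})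
      (p : (Γ.induce {v : V | lab v = b}).Walk u w), u.1 ∈ S → w.1 ∈ S := by
    intro u w p
    induction p with
    | nil => exact id
    | cons hadj p ih => exact fun hu => ih (hclose _ _ hu hadj)
  have hreach : ∀ w : {v : V | lab v = b},
      (Γ.induce {v : V | lab v = b}).Reachable v w ↔ w.1 ∈ S := by
    intro w
    constructor
    · intro hr
      exact hr.elim fun p => hwalk v w p (Finset.mem_insert_self _ _)
    · intro hw
      by_cases hwv : w = v
      · subst hwv; exact SimpleGraph.Reachable.refl _
      · have : (Γ.induce {v : V | lab v = b}).Adj v w := by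
          show Γ.Adj v.1 w.1
          exact hadjS v.1 w.1 (Finset.mem_insert_self _ _) hw
            (fun hvw => hwv (Subtype.ext hvw.symm))
        exact this.reachable
  constructor
  · -- cardinality
    have e : {w : {v : V | lab v = b} //
        (Γ.induce {v : V | lab v = b}).Reachable v w} ≃ {x : V // x ∈ S} :=
      { toFun := fun w => ⟨w.1.1, (hreach w.1).mp w.2⟩
        invFun := fun x => ⟨⟨x.1, hlabS x.1 x.2⟩, (hreach _).mpr x.2⟩
        left_inv := fun w => Subtype.ext (Subtype.ext rfl)
        right_inv := fun x => rfl }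
    rw [Nat.card_congr e, Nat.card_eq_finsetCard]
    rw [hS]
    rw [Finset.card_insert_of_notMem (by
      simp only [Finset.mem_insert, Finset.mem_singleton]
      push_neg
      exact ⟨hvf 0, hvf 1, hvf 2⟩)]
    rw [Finset.card_insert_of_notMem (by
      simp only [Finset.mem_insert, Finset.mem_singleton]
      push_neg
      exact ⟨fun h01 => (by exact absurd (finj h01) (by decide)), fun h02 =>
        (by exact absurd (finj h02) (by decide))⟩)]
    rw [Finset.card_insert_of_notMem (by
      simp only [Finset.mem_singleton]
      exact fun h12 => absurd (finj h12) (by decide))]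
    simp
  · -- clique
    intro w₁ w₂ h1 h2 hne
    show Γ.Adj w₁.1 w₂.1
    exact hadjS w₁.1 w₂.1 ((hreach w₁).mp h1) ((hreach w₂).mp h2)
      (fun hw => hne (Subtype.ext hw))

/-- In a bichromatic graph that is locally like `W(F₄)`, every connected
component of the subgraph induced on the short vertices is a clique on exactly 4 vertices,
and likewise for the subgraph induced on the long vertices. -/
theorem stmt_15 {V : Type*} (Γ : SimpleGraph V) (lab : V → Bool)
    (h : IsLocallyLikeWF4 Γ lab) :
    ∀ (b : Bool) (v : {v : V | lab v = b}),
      Nat.card {w : {v : V | lab v = b} //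
          (Γ.induce {v : V | lab v = b}).Reachable v w} = 4 ∧
        ∀ w₁ w₂ : {v : V | lab v = b},
          (Γ.induce {v : V | lab v = b}).Reachable v w₁ →
          (Γ.induce {v : V | lab v = b}).Reachable v w₂ →
          w₁ ≠ w₂ → (Γ.induce {v : V | lab v = b}).Adj w₁ w₂ := by
  exact stmt_15' Γ lab h
end

section
/- Let Γ be a bichromatic graph that is locally like W(F₄). Suppose that for every pair of vertices x, y of the same type (both short or both long) at distance 2 in Γ, the common neighborhood of x and y has exactly 3 elements. Then for every pair consisting of a short vertex x and a long vertex y at distance 2 in Γ, the common neighborhood of x and y contains exactly two short vertices and exactly two long vertices. -/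
namespace WF4Aux

instance : DecidableRel graphB3.Adj := fun a b =>
  decidable_of_iff _ (SimpleGraph.fromRel_adj _ a b).symm

theorem B1 : ∀ a b : Fin 3 × Fin 3, labelB3 a = true → labelB3 b = true → a ≠ b →
    graphB3.Adj a b := by decide

theorem B2 : ∀ a b : Fin 3 × Fin 3, labelB3 a = true → labelB3 b = false →
    ¬ graphB3.Adj a b →
    ∃ c, labelB3 c = true ∧ graphB3.Adj a c ∧ graphB3.Adj b c ∧
      ∀ d, graphB3.Adj a d → graphB3.Adj b d → d = c := by decide

theorem B3 : ∀ a : Fin 3 × Fin 3, labelB3 a = true →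
    Nat.card {b : Fin 3 × Fin 3 // labelB3 b = false ∧ graphB3.Adj a b} = 2 := by
  intro a ha
  rw [Nat.card_eq_fintype_card]
  revert a ha
  decide

variable {V : Type*} {Γ : SimpleGraph V}

theorem adj_transfer {s : Set V} (e : Γ.induce s ≃g graphB3) (u v : s) :
    graphB3.Adj (e u) (e v) ↔ Γ.Adj u.1 v.1 := by
  rw [e.map_adj_iff]; simp [SimpleGraph.comap_adj]

section Main

variable (lab : V → Bool)

/-- Step A: for `z` a common neighbor of a nonadjacent short/long pair `x, y`, there is a
unique common neighbor of `x` and `y` adjacent to `z`, and it has the same label as `z`. -/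
theorem stepA (hloc : IsLocallyLikeWF4 Γ lab) (x y : V) (hx : lab x = true)
    (hy : lab y = false) (hnadj : ¬ Γ.Adj x y) (z : V) (hzx : Γ.Adj x z) (hzy : Γ.Adj y z) :
    ∃ z', (Γ.Adj x z' ∧ Γ.Adj y z' ∧ lab z' = lab z ∧ Γ.Adj z z') ∧
      ∀ w, Γ.Adj x w → Γ.Adj y w → Γ.Adj z w → w = z' := by
  cases hz : lab z with
  | true =>
    obtain ⟨e, he⟩ := hloc.1 z hz
    set x' : Γ.neighborSet z := ⟨x, hzx.symm⟩
    set y' : Γ.neighborSet z := ⟨y, hzy.symm⟩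
    have hxl : labelB3 (e x') = true := by rw [← he x']; exact hx
    have hyl : labelB3 (e y') = false := by rw [← he y']; exact hy
    have hnadj' : ¬ graphB3.Adj (e x') (e y') := fun hc =>
      hnadj ((adj_transfer e x' y').mp hc)
    obtain ⟨c, hcl, hac, hbc, hcu⟩ := B2 _ _ hxl hyl hnadj'
    refine ⟨(e.symm c).1, ⟨?_, ?_, ?_, (e.symm c).2⟩, ?_⟩
    · have := (adj_transfer e x' (e.symm c)).mp (by rwa [e.apply_symm_apply])
      exact this
    · exact (adj_transfer e y' (e.symm c)).mp (by rwa [e.apply_symm_apply])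
    · rw [he (e.symm c), e.apply_symm_apply]; exact hcl
    · intro w hxw hyw hzw
      set w' : Γ.neighborSet z := ⟨w, hzw⟩
      have h1 : graphB3.Adj (e x') (e w') := (adj_transfer e x' w').mpr hxw
      have h2 : graphB3.Adj (e y') (e w') := (adj_transfer e y' w').mpr hyw
      have : e w' = c := hcu _ h1 h2
      have : w' = e.symm c := by rw [← this]; exact (e.symm_apply_apply w').symm
      exact congrArg Subtype.val this
  | false =>
    obtain ⟨e, he⟩ := hloc.2 z hz
    set x' : Γ.neighborSet z := ⟨x, hzx.symm⟩
    set y' : Γ.neighborSet z := ⟨y, hzy.symm⟩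
    have hxl : labelB3 (e x') = false := by
      have h0 := (he x').symm; rw [hx] at h0; simpa using h0
    have hyl : labelB3 (e y') = true := by
      have h0 := (he y').symm; rw [hy] at h0; simpa using h0
    have hnadj' : ¬ graphB3.Adj (e y') (e x') := fun hc =>
      hnadj ((adj_transfer e y' x').mp hc).symm
    obtain ⟨c, hcl, hac, hbc, hcu⟩ := B2 _ _ hyl hxl hnadj'
    refine ⟨(e.symm c).1, ⟨?_, ?_, ?_, (e.symm c).2⟩, ?_⟩
    · exact (adj_transfer e x' (e.symm c)).mp (by rwa [e.apply_symm_apply])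
    · exact (adj_transfer e y' (e.symm c)).mp (by rwa [e.apply_symm_apply])
    · rw [he (e.symm c), e.apply_symm_apply, hcl]; rfl
    · intro w hxw hyw hzw
      set w' : Γ.neighborSet z := ⟨w, hzw⟩
      have h1 : graphB3.Adj (e y') (e w') := (adj_transfer e y' w').mpr hyw
      have h2 : graphB3.Adj (e x') (e w') := (adj_transfer e x' w').mpr hxw
      have : e w' = c := hcu _ h1 h2
      have : w' = e.symm c := by rw [← this]; exact (e.symm_apply_apply w').symm
      exact congrArg Subtype.val this


theorem card_pair (p : V → Prop) (z z' : V) (hz : p z) (hz' : p z') (hne : z ≠ z')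
    (hall : ∀ w, p w → w = z ∨ w = z') : Nat.card {v // p v} = 2 := by
  have hset : {v | p v} = ({z, z'} : Set V) := by
    ext w
    simp only [Set.mem_setOf_eq, Set.mem_insert_iff, Set.mem_singleton_iff]
    exact ⟨hall w, by rintro (rfl|rfl) <;> assumption⟩
  rw [show {v : V // p v} = ↥{v | p v} from rfl, Nat.card_coe_set_eq,
    hset, Set.ncard_pair hne]

theorem card_transfer {s : Set V} (e : Γ.induce s ≃g graphB3) (P : V → Prop)
    (Q : Fin 3 × Fin 3 → Prop) (h : ∀ u : s, P u.1 ↔ Q (e u)) :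
    Nat.card {w : V // w ∈ s ∧ P w} = Nat.card {b : Fin 3 × Fin 3 // Q b} := by
  refine Nat.card_congr (Equiv.trans ?_ (e.toEquiv.subtypeEquiv h))
  exact ⟨fun w => ⟨⟨w.1, w.2.1⟩, w.2.2⟩, fun u => ⟨u.1.1, u.1.2, u.2⟩,
    fun _ => rfl, fun _ => rfl⟩

/-- If `u` is a short neighbor of the short vertex `x`, then `x` and `u` have exactly two
common neighbors that are long. -/
theorem count2_x (hloc : IsLocallyLikeWF4 Γ lab) (x u : V) (hx : lab x = true)
    (hu : lab u = true) (hxu : Γ.Adj x u) :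
    Nat.card {w : V // (Γ.Adj x w ∧ lab w = false) ∧ Γ.Adj u w} = 2 := by
  obtain ⟨e, he⟩ := hloc.1 x hx
  set u' : Γ.neighborSet x := ⟨u, hxu⟩
  have step1 : Nat.card {w : V // (Γ.Adj x w ∧ lab w = false) ∧ Γ.Adj u w}
      = Nat.card {w : V // w ∈ Γ.neighborSet x ∧ (lab w = false ∧ Γ.Adj u w)} :=
    Nat.card_congr (Equiv.subtypeEquivRight (fun w => by
      simp only [SimpleGraph.mem_neighborSet]; tauto))
  rw [step1, card_transfer e _ (fun b => labelB3 b = false ∧ graphB3.Adj (e u') b)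
    (fun v => by
      constructor
      · rintro ⟨h1, h2⟩
        exact ⟨(he v).symm.trans h1, (adj_transfer e u' v).mpr h2⟩
      · rintro ⟨h1, h2⟩
        exact ⟨(he v).trans h1, (adj_transfer e u' v).mp h2⟩)]
  exact B3 _ (by rw [← he u']; exact hu)

/-- If `w` is a long neighbor of the long vertex `y`, then `y` and `w` have exactly two
common neighbors that are short. -/
theorem count2_y (hloc : IsLocallyLikeWF4 Γ lab) (y w : V) (hy : lab y = false)
    (hw : lab w = false) (hyw : Γ.Adj y w) :
    Nat.card {u : V // (Γ.Adj y u ∧ lab u = true) ∧ Γ.Adj u w} = 2 := by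
  obtain ⟨e, he⟩ := hloc.2 y hy
  set w' : Γ.neighborSet y := ⟨w, hyw⟩
  have step1 : Nat.card {u : V // (Γ.Adj y u ∧ lab u = true) ∧ Γ.Adj u w}
      = Nat.card {u : V // u ∈ Γ.neighborSet y ∧ (lab u = true ∧ Γ.Adj u w)} :=
    Nat.card_congr (Equiv.subtypeEquivRight (fun v => by
      simp only [SimpleGraph.mem_neighborSet]; tauto))
  rw [step1, card_transfer e _ (fun b => labelB3 b = false ∧ graphB3.Adj (e w') b)
    (fun v => by
      constructor
      · rintro ⟨h1, h2⟩
        refine ⟨?_, ((adj_transfer e w' v).mpr h2.symm)⟩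
        have h0 := (he v).symm; rw [h1] at h0; simpa using h0
      · rintro ⟨h1, h2⟩
        refine ⟨?_, ((adj_transfer e w' v).mp h2).symm⟩
        rw [he v, h1]; rfl)]
  refine B3 _ ?_
  have h0 := (he w').symm; rw [hw] at h0; simpa using h0


theorem filter_card_eq_natCard {S : Set V} (hS : S.Finite) (P : V → Prop) [DecidablePred P] :
    (hS.toFinset.filter P).card = Nat.card {w : V // w ∈ S ∧ P w} := by
  have hset : {w | w ∈ S ∧ P w} = ↑(hS.toFinset.filter P) := by ext w; simp
  rw [show {w : V // w ∈ S ∧ P w} = ↥{w | w ∈ S ∧ P w} from rfl, Nat.card_coe_set_eq,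
    hset, Set.ncard_coe_finset]

theorem dist_eq_two (x u : V) (hne : x ≠ u) (hna : ¬ Γ.Adj x u) (w : V)
    (h1 : Γ.Adj x w) (h2 : Γ.Adj u w) : Γ.dist x u = 2 := by
  have hle : Γ.dist x u ≤ 2 := by
    simpa using Γ.dist_le (SimpleGraph.Walk.cons h1 (SimpleGraph.Walk.cons h2.symm .nil))
  have h0 : Γ.dist x u ≠ 0 := by
    rw [Ne, SimpleGraph.dist_eq_zero_iff_eq_or_not_reachable]
    push_neg
    exact ⟨hne, ⟨SimpleGraph.Walk.cons h1 (SimpleGraph.Walk.cons h2.symm .nil)⟩⟩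
  have h1' : Γ.dist x u ≠ 1 := fun hc => hna (SimpleGraph.dist_eq_one_iff_adj.mp hc)
  omega

theorem common_of_dist_two (x y : V) (hd : Γ.dist x y = 2) :
    ∃ z, Γ.Adj x z ∧ Γ.Adj y z := by
  obtain ⟨p, hp⟩ := Γ.exists_walk_of_dist_ne_zero (u := x) (v := y) (by omega)
  rw [hd] at hp
  cases p with
  | nil => simp at hp
  | cons h q =>
    cases q with
    | nil => simp at hp
    | cons h' q' =>
      cases q' with
      | nil => exact ⟨_, h, h'.symm⟩
      | cons h'' q'' => simp at hp

theorem not_adj_of_dist_two (x y : V) (hd : Γ.dist x y = 2) : ¬ Γ.Adj x y ∧ x ≠ y := by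
  constructor
  · intro ha; have := SimpleGraph.dist_eq_one_iff_adj.mpr ha; omega
  · rintro rfl; rw [SimpleGraph.dist_self] at hd; omega

theorem no_short_common (hloc : IsLocallyLikeWF4 Γ lab) (x u : V) (hx : lab x = true)
    (hu : lab u = true) (hne : x ≠ u) (hna : ¬ Γ.Adj x u) (v : V) (hv : lab v = true)
    (hvx : Γ.Adj v x) (hvu : Γ.Adj v u) : False := by
  obtain ⟨e, he⟩ := hloc.1 v hv
  set x' : Γ.neighborSet v := ⟨x, hvx⟩
  set u' : Γ.neighborSet v := ⟨u, hvu⟩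
  have hxl : labelB3 (e x') = true := by rw [← he x']; exact hx
  have hul : labelB3 (e u') = true := by rw [← he u']; exact hu
  have hne' : e x' ≠ e u' := fun hc => hne (congrArg Subtype.val (e.toEquiv.injective hc))
  exact hna ((adj_transfer e x' u').mp (B1 _ _ hxl hul hne'))

theorem no_long_common (hloc : IsLocallyLikeWF4 Γ lab) (x u : V) (hx : lab x = false)
    (hu : lab u = false) (hne : x ≠ u) (hna : ¬ Γ.Adj x u) (v : V) (hv : lab v = false)
    (hvx : Γ.Adj v x) (hvu : Γ.Adj v u) : False := by
  obtain ⟨e, he⟩ := hloc.2 v hv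
  set x' : Γ.neighborSet v := ⟨x, hvx⟩
  set u' : Γ.neighborSet v := ⟨u, hvu⟩
  have hxl : labelB3 (e x') = true := by
    have h0 := (he x').symm; rw [hx] at h0; simpa using h0
  have hul : labelB3 (e u') = true := by
    have h0 := (he u').symm; rw [hu] at h0; simpa using h0
  have hne' : e x' ≠ e u' := fun hc => hne (congrArg Subtype.val (e.toEquiv.injective hc))
  exact hna ((adj_transfer e x' u').mp (B1 _ _ hxl hul hne'))

theorem count3_short (hloc : IsLocallyLikeWF4 Γ lab)
    (hμ : ∀ x y : V, lab x = lab y → Γ.dist x y = 2 →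
      Nat.card {z : V // Γ.Adj x z ∧ Γ.Adj y z} = 3)
    (x u : V) (hx : lab x = true) (hu : lab u = true) (hne : x ≠ u) (hna : ¬ Γ.Adj x u)
    (hW : ∃ w, (Γ.Adj x w ∧ lab w = false) ∧ Γ.Adj u w) :
    Nat.card {w : V // (Γ.Adj x w ∧ lab w = false) ∧ Γ.Adj u w} = 3 := by
  obtain ⟨w0, ⟨hxw0, _⟩, huw0⟩ := hW
  have hd : Γ.dist x u = 2 := dist_eq_two x u hne hna w0 hxw0 huw0
  have h3 := hμ x u (hx.trans hu.symm) hd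
  rw [← h3]
  refine Nat.card_congr (Equiv.subtypeEquivRight fun w => ?_)
  constructor
  · rintro ⟨⟨h1, _⟩, h2⟩; exact ⟨h1, h2⟩
  · rintro ⟨h1, h2⟩
    refine ⟨⟨h1, ?_⟩, h2⟩
    cases hl : lab w with
    | false => rfl
    | true => exact (no_short_common lab hloc x u hx hu hne hna w hl h1.symm h2.symm).elim

theorem count3_long (hloc : IsLocallyLikeWF4 Γ lab)
    (hμ : ∀ x y : V, lab x = lab y → Γ.dist x y = 2 →
      Nat.card {z : V // Γ.Adj x z ∧ Γ.Adj y z} = 3)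
    (y w : V) (hy : lab y = false) (hw : lab w = false) (hne : y ≠ w) (hna : ¬ Γ.Adj y w)
    (hW : ∃ u, (Γ.Adj y u ∧ lab u = true) ∧ Γ.Adj u w) :
    Nat.card {u : V // (Γ.Adj y u ∧ lab u = true) ∧ Γ.Adj u w} = 3 := by
  obtain ⟨u0, ⟨hyu0, _⟩, huw0⟩ := hW
  have hd : Γ.dist y w = 2 := dist_eq_two y w hne hna u0 hyu0 huw0.symm
  have h3 := hμ y w (hy.trans hw.symm) hd
  rw [← h3]
  refine Nat.card_congr (Equiv.subtypeEquivRight fun u => ?_)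
  constructor
  · rintro ⟨⟨h1, _⟩, h2⟩; exact ⟨h1, h2.symm⟩
  · rintro ⟨h1, h2⟩
    refine ⟨⟨h1, ?_⟩, h2.symm⟩
    cases hl : lab u with
    | true => rfl
    | false => exact (no_long_common lab hloc y w hy hw hne hna u hl h1.symm h2.symm).elim

end Main

end WF4Aux

open WF4Aux

/-- Let `Γ` be a bichromatic graph locally like `W(F₄)` in which every pair
of vertices of the same type at distance 2 has exactly 3 common neighbors. Then every pair of
a short and a long vertex at distance 2 has exactly two short and exactly two long common
neighbors. -/
theorem stmt_17 {V : Type*} (Γ : SimpleGraph V) (lab : V → Bool)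
    (h : IsLocallyLikeWF4 Γ lab)
    (hμ : ∀ x y : V, lab x = lab y → Γ.dist x y = 2 →
      Nat.card {z : V // Γ.Adj x z ∧ Γ.Adj y z} = 3) :
    ∀ x y : V, lab x = true → lab y = false → Γ.dist x y = 2 →
      Nat.card {z : V // Γ.Adj x z ∧ Γ.Adj y z ∧ lab z = true} = 2 ∧
        Nat.card {z : V // Γ.Adj x z ∧ Γ.Adj y z ∧ lab z = false} = 2 := by
  intro x y hx hy hdist
  classical
  obtain ⟨hnadj, hne⟩ := not_adj_of_dist_two x y hdist
  obtain ⟨z0, hz0x, hz0y⟩ := common_of_dist_two x y hdist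
  set a := Nat.card {z : V // Γ.Adj x z ∧ Γ.Adj y z ∧ lab z = true} with ha_def
  set b := Nat.card {z : V // Γ.Adj x z ∧ Γ.Adj y z ∧ lab z = false} with hb_def
  -- If there is a short common neighbor, then a = 2.
  have hA2 : ∀ z, Γ.Adj x z → Γ.Adj y z → lab z = true → a = 2 := by
    intro z hz1 hz2 hz3
    obtain ⟨z', ⟨hz'x, hz'y, hz'l, hzz'⟩, huniq⟩ := stepA lab h x y hx hy hnadj z hz1 hz2
    rw [hz3] at hz'l
    refine card_pair _ z z' ⟨hz1, hz2, hz3⟩ ⟨hz'x, hz'y, hz'l⟩ hzz'.ne ?_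
    rintro w ⟨hw1, hw2, hw3⟩
    by_cases hwz : w = z
    · exact Or.inl hwz
    · refine Or.inr (huniq w hw1 hw2 ?_)
      by_contra hzw
      exact no_short_common lab h z w hz3 hw3 (Ne.symm hwz) hzw x hx hz1 hw1
  -- If there is a long common neighbor, then b = 2.
  have hB2 : ∀ z, Γ.Adj x z → Γ.Adj y z → lab z = false → b = 2 := by
    intro z hz1 hz2 hz3
    obtain ⟨z', ⟨hz'x, hz'y, hz'l, hzz'⟩, huniq⟩ := stepA lab h x y hx hy hnadj z hz1 hz2
    rw [hz3] at hz'l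
    refine card_pair _ z z' ⟨hz1, hz2, hz3⟩ ⟨hz'x, hz'y, hz'l⟩ hzz'.ne ?_
    rintro w ⟨hw1, hw2, hw3⟩
    by_cases hwz : w = z
    · exact Or.inl hwz
    · refine Or.inr (huniq w hw1 hw2 ?_)
      by_contra hzw
      exact no_long_common lab h z w hz3 hw3 (Ne.symm hwz) hzw y hy hz2 hw2
  have ha02 : a = 0 ∨ a = 2 := by
    by_cases hexs : ∃ z, Γ.Adj x z ∧ Γ.Adj y z ∧ lab z = true
    · obtain ⟨z, h1, h2, h3⟩ := hexs
      exact Or.inr (hA2 z h1 h2 h3)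
    · left
      haveI : IsEmpty {z : V // Γ.Adj x z ∧ Γ.Adj y z ∧ lab z = true} :=
        ⟨fun z => hexs ⟨z.1, z.2⟩⟩
      exact Nat.card_of_isEmpty
  have hb02 : b = 0 ∨ b = 2 := by
    by_cases hexs : ∃ z, Γ.Adj x z ∧ Γ.Adj y z ∧ lab z = false
    · obtain ⟨z, h1, h2, h3⟩ := hexs
      exact Or.inr (hB2 z h1 h2 h3)
    · left
      haveI : IsEmpty {z : V // Γ.Adj x z ∧ Γ.Adj y z ∧ lab z = false} :=
        ⟨fun z => hexs ⟨z.1, z.2⟩⟩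
      exact Nat.card_of_isEmpty
  -- the double counting
  obtain ⟨ex, -⟩ := h.1 x hx
  obtain ⟨ey, -⟩ := h.2 y hy
  haveI : Finite ↥(Γ.neighborSet x) := Finite.of_equiv _ ex.toEquiv.symm
  haveI : Finite ↥(Γ.neighborSet y) := Finite.of_equiv _ ey.toEquiv.symm
  have hNx : (Γ.neighborSet x).Finite := Set.finite_coe_iff.mp inferInstance
  have hNy : (Γ.neighborSet y).Finite := Set.finite_coe_iff.mp inferInstance
  have hSA : ({u | Γ.Adj y u ∧ lab u = true} : Set V).Finite := hNy.subset fun u hu => hu.1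
  have hSB : ({w | Γ.Adj x w ∧ lab w = false} : Set V).Finite := hNx.subset fun w hw => hw.1
  set A := hSA.toFinset with hA_def
  set B := hSB.toFinset with hB_def
  have hdouble : ∑ u ∈ A, (B.filter (fun w => Γ.Adj u w)).card
      = ∑ w ∈ B, (A.filter (fun u => Γ.Adj u w)).card := by
    simp only [Finset.card_filter]
    rw [Finset.sum_comm]
  -- A side
  have hCA : ∃ s, ∑ u ∈ A, (B.filter (fun w => Γ.Adj u w)).card = 2 * a + 3 * s := by
    have hsplit := Finset.sum_filter_add_sum_filter_not A (fun u => Γ.Adj x u)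
      (fun u => (B.filter (fun w => Γ.Adj u w)).card)
    have hfib2 : ∀ u ∈ A.filter (fun u => Γ.Adj x u),
        (B.filter (fun w => Γ.Adj u w)).card = 2 := by
      intro u hu
      simp only [Finset.mem_filter, Set.Finite.mem_toFinset, Set.mem_setOf_eq, hA_def] at hu
      rw [filter_card_eq_natCard hSB]
      exact count2_x lab h x u hx hu.1.2 hu.2
    have hfib03 : ∀ u ∈ A.filter (fun u => ¬ Γ.Adj x u),
        3 ∣ (B.filter (fun w => Γ.Adj u w)).card := by
      intro u hu
      simp only [Finset.mem_filter, Set.Finite.mem_toFinset, Set.mem_setOf_eq, hA_def] at hu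
      obtain ⟨⟨hyu, hlu⟩, hnxu⟩ := hu
      rw [filter_card_eq_natCard hSB]
      have hnexu : x ≠ u := by rintro rfl; exact hnadj hyu.symm
      by_cases hW : ∃ w, (Γ.Adj x w ∧ lab w = false) ∧ Γ.Adj u w
      · rw [show Nat.card {w : V // w ∈ {w | Γ.Adj x w ∧ lab w = false} ∧ Γ.Adj u w}
            = Nat.card {w : V // (Γ.Adj x w ∧ lab w = false) ∧ Γ.Adj u w} from rfl,
          count3_short lab h hμ x u hx hlu hnexu hnxu hW]
      · haveI : IsEmpty {w : V // w ∈ {w | Γ.Adj x w ∧ lab w = false} ∧ Γ.Adj u w} :=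
          ⟨fun w => hW ⟨w.1, w.2.1, w.2.2⟩⟩
        rw [Nat.card_of_isEmpty]
        exact dvd_zero 3
    have e1 : ∑ u ∈ A.filter (fun u => Γ.Adj x u), (B.filter (fun w => Γ.Adj u w)).card
        = 2 * (A.filter (fun u => Γ.Adj x u)).card := by
      rw [Finset.sum_congr rfl hfib2, Finset.sum_const, smul_eq_mul, mul_comm]
    have e2 : (A.filter (fun u => Γ.Adj x u)).card = a := by
      rw [hA_def, filter_card_eq_natCard hSA, ha_def]
      exact Nat.card_congr (Equiv.subtypeEquivRight fun z => by
        simp only [Set.mem_setOf_eq]; tauto)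
    obtain ⟨s, hs⟩ := Finset.dvd_sum hfib03
    exact ⟨s, by rw [← hsplit, e1, e2, hs]⟩
  -- B side
  have hCB : ∃ t, ∑ w ∈ B, (A.filter (fun u => Γ.Adj u w)).card = 2 * b + 3 * t := by
    have hsplit := Finset.sum_filter_add_sum_filter_not B (fun w => Γ.Adj y w)
      (fun w => (A.filter (fun u => Γ.Adj u w)).card)
    have hfib2 : ∀ w ∈ B.filter (fun w => Γ.Adj y w),
        (A.filter (fun u => Γ.Adj u w)).card = 2 := by
      intro w hw
      simp only [Finset.mem_filter, Set.Finite.mem_toFinset, Set.mem_setOf_eq, hB_def] at hw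
      rw [filter_card_eq_natCard hSA]
      exact count2_y lab h y w hy hw.1.2 hw.2
    have hfib03 : ∀ w ∈ B.filter (fun w => ¬ Γ.Adj y w),
        3 ∣ (A.filter (fun u => Γ.Adj u w)).card := by
      intro w hw
      simp only [Finset.mem_filter, Set.Finite.mem_toFinset, Set.mem_setOf_eq, hB_def] at hw
      obtain ⟨⟨hxw, hlw⟩, hnyw⟩ := hw
      rw [filter_card_eq_natCard hSA]
      have hneyw : y ≠ w := by rintro rfl; exact hnadj hxw
      by_cases hW : ∃ u, (Γ.Adj y u ∧ lab u = true) ∧ Γ.Adj u w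
      · rw [show Nat.card {u : V // u ∈ {u | Γ.Adj y u ∧ lab u = true} ∧ Γ.Adj u w}
            = Nat.card {u : V // (Γ.Adj y u ∧ lab u = true) ∧ Γ.Adj u w} from rfl,
          count3_long lab h hμ y w hy hlw hneyw hnyw hW]
      · haveI : IsEmpty {u : V // u ∈ {u | Γ.Adj y u ∧ lab u = true} ∧ Γ.Adj u w} :=
          ⟨fun u => hW ⟨u.1, u.2.1, u.2.2⟩⟩
        rw [Nat.card_of_isEmpty]
        exact dvd_zero 3
    have e1 : ∑ w ∈ B.filter (fun w => Γ.Adj y w), (A.filter (fun u => Γ.Adj u w)).card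
        = 2 * (B.filter (fun w => Γ.Adj y w)).card := by
      rw [Finset.sum_congr rfl hfib2, Finset.sum_const, smul_eq_mul, mul_comm]
    have e2 : (B.filter (fun w => Γ.Adj y w)).card = b := by
      rw [hB_def, filter_card_eq_natCard hSB, hb_def]
      exact Nat.card_congr (Equiv.subtypeEquivRight fun z => by
        simp only [Set.mem_setOf_eq]; tauto)
    obtain ⟨t, ht⟩ := Finset.dvd_sum hfib03
    exact ⟨t, by rw [← hsplit, e1, e2, ht]⟩
  obtain ⟨s, hs⟩ := hCA
  obtain ⟨t, ht⟩ := hCB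
  rw [hdouble, ht] at hs
  -- conclude
  cases hz0l : lab z0 with
  | true =>
    have ha2 : a = 2 := hA2 z0 hz0x hz0y hz0l
    exact ⟨ha2, by omega⟩
  | false =>
    have hb2 : b = 2 := hB2 z0 hz0x hz0y hz0l
    exact ⟨by omega, hb2⟩
end
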